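/- arXiv:1202.1787 — 9 statements merged into one kernel-verified Lean document; each statement's English description precedes it below -/
import Mathlib

section
/- For two probability mass functions P and Q on a finite set 𝒳 with total variation distance ‖P−Q‖₁ = Σ_{x∈𝒳} |P(x)−Q(x)| ≤ 1/2, the difference of their Shannon entropies satisfies |H(P) − H(Q)| ≤ −‖P−Q‖₁ · log(‖P−Q‖₁ / |𝒳|). -/
/-!
Entropy is a sum of the concave function `negMulLog t = -t log t`. For `0 ≤ s ≤ t ≤ 1` with
`t - s ≤ 1/2`, concavity (increments of a concave function shrink as one moves right) bounds the
increment `negMulLog t - negMulLog s` between its values at the two ends of `[0, 1]`, namely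
`negMulLog (t - s)` and `-negMulLog (1 - (t - s))`, and `negMulLog (1 - c) ≤ negMulLog c` for
`c ≤ 1/2`. Summing these pointwise bounds and applying Jensen's inequality to the concave
`negMulLog` over the `|𝒳|` points `|P x - Q x|` gives the bound.
-/

open Real Finset

theorem ConcaveOn.add_le_add_of_add_eq {s : Set ℝ} {f : ℝ → ℝ} (hf : ConcaveOn ℝ s f)
    {x y z w : ℝ} (hx : x ∈ s) (hw : w ∈ s) (hxy : x ≤ y) (hyw : y ≤ w) (h : y + z = x + w) :
    f x + f w ≤ f y + f z := by
  obtain rfl : z = x + w - y := by linarith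
  rcases hxy.eq_or_lt with rfl | hxy'
  · simp
  have hxw : 0 < w - x := by linarith
  set a := (w - y) / (w - x)
  set b := (y - x) / (w - x)
  have ha : 0 ≤ a := div_nonneg (by linarith) hxw.le
  have hb : 0 ≤ b := div_nonneg (by linarith) hxw.le
  have hab : a + b = 1 := by simp only [a, b]; field_simp; ring
  have hy : a • x + b • w = y := by simp only [smul_eq_mul, a, b]; field_simp; ring
  have hz : b • x + a • w = x + w - y := by simp only [smul_eq_mul, a, b]; field_simp; ring
  have hfy := hf.2 hx hw ha hb hab
  have hfz := hf.2 hx hw hb ha (by linarith)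
  rw [hy] at hfy
  rw [hz] at hfz
  simp only [smul_eq_mul] at hfy hfz
  linear_combination hfy + hfz - (f x + f w) * hab

namespace Real

theorem negMulLog_one_sub_le {c : ℝ} (hc₀ : 0 ≤ c) (hc : c ≤ 1 / 2) :
    negMulLog (1 - c) ≤ negMulLog c := by
  rcases hc₀.eq_or_lt with rfl | hc₀'
  · simp
  have hd : 0 < 1 - c := by linarith
  have h₁ : log c - log (1 - c) ≤ c / (1 - c) - 1 := by
    rw [← log_div hc₀'.ne' hd.ne']
    exact log_le_sub_one_of_pos (div_pos hc₀' hd)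
  have h₂ : -log (1 - c) ≤ 1 / (1 - c) - 1 := by
    rw [← log_inv, ← one_div]
    exact log_le_sub_one_of_pos (one_div_pos.2 hd)
  have h₁' : (1 - c) * (log c - log (1 - c)) ≤ 2 * c - 1 :=
    calc (1 - c) * (log c - log (1 - c)) ≤ (1 - c) * (c / (1 - c) - 1) :=
          mul_le_mul_of_nonneg_left h₁ hd.le
      _ = 2 * c - 1 := by field_simp; ring
  have h₂' : -((1 - c) * log (1 - c)) ≤ c :=
    calc -((1 - c) * log (1 - c)) = (1 - c) * -log (1 - c) := by ring
      _ ≤ (1 - c) * (1 / (1 - c) - 1) := mul_le_mul_of_nonneg_left h₂ hd.le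
      _ = c := by field_simp; ring
  simp only [negMulLog_eq_neg]
  nlinarith [mul_le_mul_of_nonneg_left h₂' (by linarith : 0 ≤ 1 - 2 * c),
    mul_le_mul_of_nonneg_left h₁' hc₀]

theorem abs_negMulLog_sub_le_of_le {s t : ℝ} (hs : 0 ≤ s) (hst : s ≤ t) (ht : t ≤ 1)
    (hts : t - s ≤ 1 / 2) : |negMulLog t - negMulLog s| ≤ negMulLog (t - s) := by
  have upper := concaveOn_negMulLog.add_le_add_of_add_eq (Set.mem_Ici.2 le_rfl)
    (Set.mem_Ici.2 (hs.trans hst)) hs (by linarith) (by ring : s + (t - s) = 0 + t)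
  have lower := concaveOn_negMulLog.add_le_add_of_add_eq (Set.mem_Ici.2 hs)
    (Set.mem_Ici.2 zero_le_one) hst ht (by ring : t + (1 - (t - s)) = s + 1)
  have hflip := negMulLog_one_sub_le (sub_nonneg.2 hst) hts
  rw [negMulLog_zero] at upper
  rw [negMulLog_one] at lower
  rw [abs_le]
  constructor <;> linarith

theorem abs_negMulLog_sub_le {s t : ℝ} (hs₀ : 0 ≤ s) (hs₁ : s ≤ 1) (ht₀ : 0 ≤ t) (ht₁ : t ≤ 1)
    (hts : |t - s| ≤ 1 / 2) : |negMulLog t - negMulLog s| ≤ negMulLog |t - s| := by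
  rcases le_total s t with hst | hts'
  · rw [abs_of_nonneg (sub_nonneg.2 hst)] at hts ⊢
    exact abs_negMulLog_sub_le_of_le hs₀ hst ht₁ hts
  · rw [abs_sub_comm, abs_of_nonneg (sub_nonneg.2 hts')] at hts
    rw [abs_sub_comm, abs_sub_comm t, abs_of_nonneg (sub_nonneg.2 hts')]
    exact abs_negMulLog_sub_le_of_le ht₀ hts' hs₁ hts

theorem sum_negMulLog_le {ι : Type*} [Fintype ι] [Nonempty ι] {p : ι → ℝ} (hp : ∀ i, 0 ≤ p i) :
    ∑ i, negMulLog (p i) ≤ Fintype.card ι * negMulLog ((∑ i, p i) / Fintype.card ι) := by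
  have hn : (0 : ℝ) < Fintype.card ι := by exact_mod_cast Fintype.card_pos
  have hJ := concaveOn_negMulLog.le_map_sum (t := univ) (w := fun _ ↦ (Fintype.card ι : ℝ)⁻¹)
    (fun _ _ ↦ inv_nonneg.2 hn.le) (by simp [card_univ, hn.ne'])
    (fun i _ ↦ Set.mem_Ici.2 (hp i))
  simp only [smul_eq_mul, ← mul_sum] at hJ
  rw [inv_mul_eq_div, inv_mul_eq_div, div_le_iff₀ hn] at hJ
  linarith

theorem neg_sum_mul_logb {ι : Type*} (s : Finset ι) (p : ι → ℝ) (b : ℝ) :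
    -∑ i ∈ s, p i * logb b (p i) = (∑ i ∈ s, negMulLog (p i)) / log b := by
  simp only [logb, negMulLog, sum_div, ← sum_neg_distrib]
  refine sum_congr rfl fun i _ ↦ ?_
  ring

end Real

/-- Entropy-continuity bound (Cover–Thomas Thm 16.3.2): for two pmfs `P`, `Q` on a finite
nonempty set with total variation distance `‖P−Q‖₁ = ∑ |P x − Q x| ≤ 1/2`, we have
`|H(P) − H(Q)| ≤ −‖P−Q‖₁ · log₂(‖P−Q‖₁ / |𝒳|)`. -/
theorem stmt_0 {X : Type*} [Fintype X] [Nonempty X]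
    (P Q : X → ℝ) (hP0 : ∀ x, 0 ≤ P x) (hQ0 : ∀ x, 0 ≤ Q x)
    (hP1 : ∑ x, P x = 1) (hQ1 : ∑ x, Q x = 1)
    (htv : ∑ x, |P x - Q x| ≤ 1 / 2) :
    |(-∑ x, P x * Real.logb 2 (P x)) - (-∑ x, Q x * Real.logb 2 (Q x))| ≤
      -(∑ x, |P x - Q x|) * Real.logb 2 ((∑ x, |P x - Q x|) / (Fintype.card X : ℝ)) := by
  have hle_one {R : X → ℝ} (hR0 : ∀ x, 0 ≤ R x) (hR1 : ∑ x, R x = 1) (x : X) : R x ≤ 1 :=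
    hR1 ▸ single_le_sum (fun y _ ↦ hR0 y) (mem_univ x)
  have hdist (x : X) : |P x - Q x| ≤ 1 / 2 :=
    (single_le_sum (f := fun y ↦ |P y - Q y|) (fun y _ ↦ abs_nonneg _) (mem_univ x)).trans htv
  have key : |∑ x, negMulLog (P x) - ∑ x, negMulLog (Q x)| ≤
      Fintype.card X * negMulLog ((∑ x, |P x - Q x|) / Fintype.card X) :=
    calc |∑ x, negMulLog (P x) - ∑ x, negMulLog (Q x)|
        ≤ ∑ x, |negMulLog (P x) - negMulLog (Q x)| := by
          rw [← sum_sub_distrib]; exact abs_sum_le_sum_abs _ _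
      _ ≤ ∑ x, negMulLog |P x - Q x| := sum_le_sum fun x _ ↦
          abs_negMulLog_sub_le (hQ0 x) (hle_one hQ0 hQ1 x) (hP0 x) (hle_one hP0 hP1 x) (hdist x)
      _ ≤ _ := sum_negMulLog_le fun x ↦ abs_nonneg _
  have hlog2 : 0 < log 2 := log_pos one_lt_two
  rw [neg_sum_mul_logb, neg_sum_mul_logb, ← sub_div, abs_div, abs_of_pos hlog2]
  refine (div_le_div_of_nonneg_right key hlog2.le).trans_eq ?_
  rw [negMulLog, logb]
  field_simp
end

section
/- For two probability mass functions P and Q on a finite set 𝒳, the relative entropy satisfies D(P‖Q) ≥ ‖P−Q‖₁² / (2 log 2), where ‖P−Q‖₁ = Σ_x |P(x)−Q(x)| (Pinsker's inequality). -/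
open Real Finset

/-!
The pointwise inequality `t log t - t + 1 ≥ 3 (t - 1)² / (2 (t + 2))` for `t > 0` holds because
the difference is convex on `(0, ∞)` with a critical point at `t = 1`. Applied to `t = P x / Q x`,
multiplied by `Q x` and summed, it gives `D ≥ (3/2) ∑ (P - Q)² / (P + 2Q)` in nats, and
Cauchy–Schwarz with weights `P + 2Q`, whose total mass is `3`, bounds `‖P - Q‖₁²` by three times
that sum.
-/

theorem hasDerivAt_mul_log_sub_sq_div {s : ℝ} (hs : 0 < s) :
    HasDerivAt (fun u => u * log u - u + 1 - 3 / 2 * (u - 1) ^ 2 / (u + 2))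
      (log s - 3 / 2 * ((s - 1) * (s + 5)) / (s + 2) ^ 2) s := by
  have h := ((((hasDerivAt_mul_log hs.ne').sub (hasDerivAt_id s)).add_const 1).sub
    ((((hasDerivAt_id s).sub_const 1).pow 2).const_mul (3 / 2 : ℝ) |>.div
      ((hasDerivAt_id s).add_const 2) (by positivity : s + 2 ≠ 0)))
  refine h.congr_deriv ?_
  simp only [id, Pi.pow_apply]
  field_simp
  ring

theorem hasDerivAt_log_sub_mul_div {s : ℝ} (hs : 0 < s) :
    HasDerivAt (fun u => log u - 3 / 2 * ((u - 1) * (u + 5)) / (u + 2) ^ 2)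
      (1 / s - 27 / (s + 2) ^ 3) s := by
  have h := (hasDerivAt_log hs.ne').sub
    (((((hasDerivAt_id s).sub_const 1).mul ((hasDerivAt_id s).add_const 5)).const_mul
      (3 / 2 : ℝ)).div (((hasDerivAt_id s).add_const 2).pow 2) (by positivity : (s + 2) ^ 2 ≠ 0))
  refine h.congr_deriv ?_
  simp only [id, Pi.pow_apply, Pi.mul_apply]
  field_simp
  ring

theorem convexOn_mul_log_sub_sq_div :
    ConvexOn ℝ (Set.Ioi 0) (fun u => u * log u - u + 1 - 3 / 2 * (u - 1) ^ 2 / (u + 2)) := by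
  refine convexOn_of_hasDerivWithinAt2_nonneg (convex_Ioi 0)
    (f' := fun s => log s - 3 / 2 * ((s - 1) * (s + 5)) / (s + 2) ^ 2)
    (f'' := fun s => 1 / s - 27 / (s + 2) ^ 3)
    (fun s hs => (hasDerivAt_mul_log_sub_sq_div hs).continuousAt.continuousWithinAt)
    (fun s hs => ?_) (fun s hs => ?_) (fun s hs => ?_) <;> rw [interior_Ioi, Set.mem_Ioi] at hs
  · exact (hasDerivAt_mul_log_sub_sq_div hs).hasDerivWithinAt
  · exact (hasDerivAt_log_sub_mul_div hs).hasDerivWithinAt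
  · -- `(s + 2) ^ 3 - 27 s = (s - 1) ^ 2 (s + 8)`
    rw [sub_nonneg, div_le_div_iff₀ (by positivity) hs]
    nlinarith [mul_nonneg (sq_nonneg (s - 1)) hs.le]

theorem sq_div_le_mul_log_sub_add {t : ℝ} (ht : 0 < t) :
    3 / 2 * (t - 1) ^ 2 / (t + 2) ≤ t * log t - t + 1 := by
  have hmin := convexOn_mul_log_sub_sq_div.isMinOn_of_rightDeriv_eq_zero
    (by rw [interior_Ioi]; exact one_pos (α := ℝ))
    (((hasDerivAt_mul_log_sub_sq_div one_pos).hasDerivWithinAt.derivWithin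
      (uniqueDiffWithinAt_Ioi 1)).trans (by norm_num))
  have := hmin (Set.mem_Ioi.2 ht)
  norm_num at this
  linarith

theorem sq_div_le_mul_log_div_sub_add {p q : ℝ} (hp : 0 ≤ p) (hq : 0 ≤ q) (hpq : q = 0 → p = 0) :
    3 / 2 * (p - q) ^ 2 / (p + 2 * q) ≤ p * log (p / q) - p + q := by
  obtain rfl | hq := hq.eq_or_lt
  · simp [hpq rfl]
  obtain rfl | hp := hp.eq_or_lt
  · rw [div_le_iff₀ (by positivity)]
    simp only [zero_sub, even_two, Even.neg_pow, zero_div, log_zero, mul_zero, sub_self, zero_add]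
    nlinarith
  calc 3 / 2 * (p - q) ^ 2 / (p + 2 * q) = q * (3 / 2 * (p / q - 1) ^ 2 / (p / q + 2)) := by
        field_simp
    _ ≤ q * (p / q * log (p / q) - p / q + 1) := by
        gcongr
        exact sq_div_le_mul_log_sub_add (div_pos hp hq)
    _ = p * log (p / q) - p + q := by
        field_simp

theorem three_halves_mul_sum_sq_div_le_sum_mul_log_div {ι : Type*} (s : Finset ι) {P Q : ι → ℝ}
    (hP : ∀ i ∈ s, 0 ≤ P i) (hQ : ∀ i ∈ s, 0 ≤ Q i) (hPQ : ∀ i ∈ s, Q i = 0 → P i = 0)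
    (hsum : ∑ i ∈ s, P i = ∑ i ∈ s, Q i) :
    3 / 2 * ∑ i ∈ s, (P i - Q i) ^ 2 / (P i + 2 * Q i) ≤ ∑ i ∈ s, P i * log (P i / Q i) :=
  calc 3 / 2 * ∑ i ∈ s, (P i - Q i) ^ 2 / (P i + 2 * Q i)
      ≤ ∑ i ∈ s, (P i * log (P i / Q i) - P i + Q i) := by
        rw [mul_sum]
        gcongr with i hi
        rw [← mul_div_assoc]
        exact sq_div_le_mul_log_div_sub_add (hP i hi) (hQ i hi) (hPQ i hi)
    _ = ∑ i ∈ s, P i * log (P i / Q i) := by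
        rw [sum_add_distrib, sum_sub_distrib, hsum, sub_add_cancel]

theorem sq_sum_abs_sub_le_mul_sum_sq_div {ι : Type*} (s : Finset ι) {P Q : ι → ℝ}
    (hP : ∀ i ∈ s, 0 ≤ P i) (hQ : ∀ i ∈ s, 0 ≤ Q i) :
    (∑ i ∈ s, |P i - Q i|) ^ 2 ≤
      (∑ i ∈ s, (P i + 2 * Q i)) * ∑ i ∈ s, (P i - Q i) ^ 2 / (P i + 2 * Q i) := by
  refine sum_sq_le_sum_mul_sum_of_sq_le_mul s (fun i hi => by linarith [hP i hi, hQ i hi])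
    (fun i hi => div_nonneg (sq_nonneg _) (by linarith [hP i hi, hQ i hi])) fun i hi => ?_
  obtain h0 | hpos := (show 0 ≤ P i + 2 * Q i by linarith [hP i hi, hQ i hi]).eq_or_lt
  · have hQ0 : Q i = 0 := by linarith [hP i hi, hQ i hi]
    have hP0 : P i = 0 := by linarith
    simp [hP0, hQ0]
  · rw [sq_abs, mul_div_cancel₀ _ hpos.ne']

/-- Pinsker's inequality: for two pmfs `P`, `Q` on a finite set with `P` absolutely
continuous with respect to `Q`, the relative entropy (in bits) satisfies
`D(P‖Q) ≥ ‖P−Q‖₁² / (2 log 2)`. -/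
theorem stmt_1 {X : Type*} [Fintype X]
    (P Q : X → ℝ) (hP0 : ∀ x, 0 ≤ P x) (hQ0 : ∀ x, 0 ≤ Q x)
    (hP1 : ∑ x, P x = 1) (hQ1 : ∑ x, Q x = 1)
    (hac : ∀ x, Q x = 0 → P x = 0) :
    (∑ x, |P x - Q x|) ^ 2 / (2 * Real.log 2) ≤ ∑ x, P x * Real.logb 2 (P x / Q x) := by
  have hkl := three_halves_mul_sum_sq_div_le_sum_mul_log_div univ (fun x _ => hP0 x)
    (fun x _ => hQ0 x) (fun x _ => hac x) (hP1.trans hQ1.symm)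
  have hcs := sq_sum_abs_sub_le_mul_sum_sq_div univ (fun x _ => hP0 x) (fun x _ => hQ0 x)
  have hmass : ∑ x, (P x + 2 * Q x) = 3 := by
    rw [sum_add_distrib, ← mul_sum, hP1, hQ1]; norm_num
  rw [hmass] at hcs
  simp only [logb, ← mul_div_assoc, ← sum_div]
  rw [← div_div, div_le_div_iff_of_pos_right (log_pos one_lt_two)]
  linarith
end

section
/- Let G be a graph with vertex set V and let G_f be its factor graph (bipartite graph on V ∪ C where C is the set of maximal cliques of G, with an edge {v,c} iff v ∈ c). Then for every pair of vertices i, j ∈ V, the graph distance in G_f equals twice the graph distance in G: d_f(i,j) = 2·d(i,j). -/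
/-!
Every edge of `G` lies in a maximal clique, since `V` is finite, so a walk in `G` lifts to a walk
in the factor graph of twice the length, alternating between vertices and cliques. Conversely,
two consecutive steps `u – c – w` of a factor-graph walk stay inside the clique `c`, so either
`u = w` or `u` and `w` are adjacent in `G`.
-/

/-- The maximal cliques of a graph, as finite vertex sets. -/
def maximalCliques {V : Type*} (G : SimpleGraph V) : Set (Finset V) :=
  {c | G.IsClique (c : Set V) ∧ ∀ t : Finset V, G.IsClique (t : Set V) → c ⊆ t → c = t}

/-- The factor graph of `G`: a bipartite graph on `V ⊕ C`, where `C` is the set of maximal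
cliques of `G`, with an edge `{v, c}` iff `v ∈ c`. -/
def factorGraph {V : Type*} [DecidableEq V] (G : SimpleGraph V) :
    SimpleGraph (V ⊕ (maximalCliques G)) where
  Adj a b :=
    match a, b with
    | Sum.inl v, Sum.inr c => v ∈ c.1
    | Sum.inr c, Sum.inl v => v ∈ c.1
    | _, _ => False
  symm := ⟨by rintro (v | c) (w | d) h <;> simp_all⟩
  loopless := ⟨by rintro (v | c) h <;> simp_all⟩

open Sum

namespace SimpleGraph

variable {V : Type*} {G : SimpleGraph V} {u v : V}

theorem exists_mem_maximalCliques_superset [Finite V] {s : Finset V}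
    (hs : G.IsClique (s : Set V)) :
    ∃ c ∈ maximalCliques G, s ⊆ c := by
  obtain ⟨c, ⟨hc, hsc⟩, hmax⟩ := Set.Finite.exists_maximalFor id
    {t : Finset V | G.IsClique (t : Set V) ∧ s ⊆ t} (Set.toFinite _) ⟨s, hs, le_rfl⟩
  exact ⟨c, ⟨hc, fun t ht hct ↦ le_antisymm hct (hmax ⟨ht, hsc.trans hct⟩ hct)⟩, hsc⟩

theorem Adj.exists_maximalCliques [Finite V] (h : G.Adj u v) :
    ∃ c : maximalCliques G, u ∈ c.1 ∧ v ∈ c.1 := by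
  classical
  obtain ⟨c, hc, hsub⟩ := exists_mem_maximalCliques_superset (s := {u, v})
    (by simpa using isClique_pair.2 fun _ ↦ h)
  exact ⟨⟨c, hc⟩, hsub (by simp), hsub (by simp)⟩

variable [DecidableEq V]

theorem factorGraph_adj_inl_inr {c : maximalCliques G} :
    (factorGraph G).Adj (inl v) (inr c) ↔ v ∈ c.1 := Iff.rfl

theorem factorGraph_adj_inr_inl {c : maximalCliques G} :
    (factorGraph G).Adj (inr c) (inl v) ↔ v ∈ c.1 := Iff.rfl

theorem Walk.exists_factorGraph_walk [Finite V] (q : G.Walk u v) :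
    ∃ p : (factorGraph G).Walk (inl u) (inl v), p.length = 2 * q.length := by
  induction q with
  | nil => exact ⟨.nil, rfl⟩
  | cons h _ ih =>
    obtain ⟨p, hp⟩ := ih
    obtain ⟨c, hu, hw⟩ := Adj.exists_maximalCliques h
    refine ⟨.cons (factorGraph_adj_inl_inr.2 hu) (.cons (factorGraph_adj_inr_inl.2 hw) p), ?_⟩
    simp only [Walk.length_cons, hp]
    ring

theorem exists_walk_two_mul_length_le :
    ∀ {u v : V} (p : (factorGraph G).Walk (inl u) (inl v)),
      ∃ q : G.Walk u v, 2 * q.length ≤ p.length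
  | _, _, .nil => ⟨.nil, le_rfl⟩
  | _, _, .cons (v := inl _) h _ => h.elim
  | _, _, .cons (v := inr _) _ (.cons (v := inr _) h _) => h.elim
  | u, _, .cons (v := inr c) hu (.cons (v := inl w) hw p) => by
    obtain ⟨q, hq⟩ := exists_walk_two_mul_length_le p
    by_cases huw : u = w
    · subst huw
      exact ⟨q, by simp only [Walk.length_cons]; omega⟩
    · exact ⟨.cons (c.2.1 hu hw huw) q, by simp only [Walk.length_cons]; omega⟩

theorem factorGraph_dist_le_two_mul_dist [Finite V] (h : G.Reachable u v) :
    (factorGraph G).dist (inl u) (inl v) ≤ 2 * G.dist u v := by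
  obtain ⟨q, hq⟩ := h.exists_walk_length_eq_dist
  obtain ⟨p, hp⟩ := q.exists_factorGraph_walk
  exact hq ▸ hp ▸ dist_le p

theorem two_mul_dist_le_factorGraph_dist (h : (factorGraph G).Reachable (inl u) (inl v)) :
    2 * G.dist u v ≤ (factorGraph G).dist (inl u) (inl v) := by
  obtain ⟨p, hp⟩ := h.exists_walk_length_eq_dist
  obtain ⟨q, hq⟩ := exists_walk_two_mul_length_le p
  calc 2 * G.dist u v ≤ 2 * q.length := Nat.mul_le_mul_left 2 (dist_le q)
    _ ≤ _ := hp ▸ hq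

end SimpleGraph

/-- Distances in the factor graph are twice the distances in the original graph:
for all `i, j ∈ V` in a common connected component, `d_f(i, j) = 2 d(i, j)`. -/
theorem stmt_3 {V : Type*} [Fintype V] [DecidableEq V] (G : SimpleGraph V) (i j : V)
    (hreach : G.Reachable i j) :
    (factorGraph G).dist (Sum.inl i) (Sum.inl j) = 2 * G.dist i j := by
  obtain ⟨q⟩ := hreach
  obtain ⟨p, -⟩ := q.exists_factorGraph_walk
  exact (SimpleGraph.factorGraph_dist_le_two_mul_dist ⟨q⟩).antisymm
    (SimpleGraph.two_mul_dist_le_factorGraph_dist ⟨p⟩)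
end

section
/- Let P be the distribution of a graphical model on G(V,E) given by a product of edge potentials, let A, B, C partition V with B separating A from C in G, and let P̃ be the distribution of the induced model on the subgraph of G induced by A ∪ B with the same edge potentials. Then for every D ⊆ A and all configurations, P(x_D | x_B) = P̃(x_D | x_B). -/
/-- Unnormalized weight of a configuration under pairwise edge potentials on `G`. -/
noncomputable def edgeWeight {V 𝒳 : Type*} [Fintype V] [LinearOrder V]
    (G : SimpleGraph V) [DecidableRel G.Adj] (Φ : V → V → 𝒳 → 𝒳 → ℝ) (z : V → 𝒳) : ℝ :=
  ∏ p ∈ Finset.univ.filter (fun p : V × V => p.1 < p.2 ∧ G.Adj p.1 p.2),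
    Φ p.1 p.2 (z p.1) (z p.2)

/-- Unnormalized marginal of a weight function `f` on the coordinates in `S`, at the
restriction of `x`. -/
noncomputable def mgw {V 𝒳 : Type*} [Fintype V] [DecidableEq V] [Fintype 𝒳] [DecidableEq 𝒳]
    (f : (V → 𝒳) → ℝ) (S : Finset V) (x : V → 𝒳) : ℝ :=
  ∑ z : V → 𝒳, if ∀ v ∈ S, z v = x v then f z else 0


/-! The weight of `P` is the product of the potentials on edges inside `A ∪ B`, which is the
weight of `P̃`, and of the potentials on the remaining edges. Since `B` separates `A` from `C`,
no remaining edge touches `A`, so the second factor only sees coordinates outside `A`. With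
`x_B` fixed, a marginal sum therefore splits into a sum over the `A`-part of the configuration
times a sum over the rest; the latter is the same positive number for `D ∪ B` and for `B`, and
cancels in the conditional probability. -/

section Marginal

variable {V 𝒳 : Type*} [Fintype V] [DecidableEq V] [Fintype 𝒳] [DecidableEq 𝒳]

theorem mgw_eq_sum_filter (f : (V → 𝒳) → ℝ) (S : Finset V) (x : V → 𝒳) :
    mgw f S x = ∑ z ∈ Finset.univ.filter (fun z : V → 𝒳 => ∀ v ∈ S, z v = x v), f z :=
  (Finset.sum_filter _ _).symm

theorem mgw_pos {f : (V → 𝒳) → ℝ} (hf : ∀ z, 0 < f z) (S : Finset V) (x : V → 𝒳) :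
    0 < mgw f S x := by
  rw [mgw_eq_sum_filter]
  exact Finset.sum_pos (fun z _ => hf z) ⟨x, by simp⟩

theorem mgw_mul_eq_mul (A S : Finset V) {F H : (V → 𝒳) → ℝ}
    (hF : ∀ z w : V → 𝒳, (∀ v ∈ A ∪ S, z v = w v) → F z = F w)
    (hH : ∀ z w : V → 𝒳, (∀ v ∉ A, z v = w v) → H z = H w) (x : V → 𝒳) :
    mgw (fun z => F z * H z) S x = mgw F (S ∪ Aᶜ) x * mgw H (A ∪ S) x := by
  simp only [mgw_eq_sum_filter, Finset.sum_mul_sum, ← Finset.sum_product']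
  symm
  refine Finset.sum_nbij' (fun p => A.piecewise p.1 p.2)
    (fun z => (A.piecewise z x, A.piecewise x z)) ?_ ?_ ?_ ?_ ?_ <;>
    simp only [Finset.mem_product, Finset.mem_filter, Finset.mem_univ, true_and, Finset.mem_union,
      Finset.mem_compl, Prod.forall]
  · intro u w ⟨hu, hw⟩ v hv
    by_cases hvA : v ∈ A <;> simp [hvA, hu v, hw v, hv]
  · intro z hz
    constructor <;> intro v hv <;> by_cases hvA : v ∈ A <;> simp_all
  · intro u w ⟨hu, hw⟩
    ext v <;> by_cases hvA : v ∈ A <;> simp_all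
  · intro z _
    ext v; by_cases hvA : v ∈ A <;> simp [hvA]
  · intro u w ⟨hu, hw⟩
    congr 1
    · refine hF _ _ fun v hv => ?_
      by_cases hvA : v ∈ A <;> simp_all
    · exact hH _ _ fun v hv => by simp [hv]

theorem mgw_mul_div_mgw_mul (A : Finset V) {S S' : Finset V} (hS : A ∪ S = A ∪ S')
    {F H : (V → 𝒳) → ℝ} (hF : ∀ z w : V → 𝒳, (∀ v ∈ A ∪ S, z v = w v) → F z = F w)
    (hH : ∀ z w : V → 𝒳, (∀ v ∉ A, z v = w v) → H z = H w) (hH_pos : ∀ z, 0 < H z)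
    (x : V → 𝒳) :
    mgw (fun z => F z * H z) S x / mgw (fun z => F z * H z) S' x = mgw F S x / mgw F S' x := by
  have hF' : ∀ z w : V → 𝒳, (∀ v ∈ A ∪ S', z v = w v) → F z = F w := hS ▸ hF
  have h_one : ∀ T, mgw F T x = mgw (fun z => F z * (fun _ => 1) z) T x := by
    simp only [mul_one, implies_true]
  rw [h_one S, h_one S', mgw_mul_eq_mul A S hF hH, mgw_mul_eq_mul A S' hF' hH,
    mgw_mul_eq_mul A S hF (fun _ _ _ => rfl), mgw_mul_eq_mul A S' hF' (fun _ _ _ => rfl), ← hS,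
    mul_div_mul_right _ _ (mgw_pos hH_pos _ _).ne',
    mul_div_mul_right _ _ (mgw_pos (fun _ => one_pos) _ _).ne']

end Marginal

theorem SimpleGraph.spanningCoe_induce_adj {V : Type*} {G : SimpleGraph V} {s : Set V} {u v : V} :
    (G.induce s).spanningCoe.Adj u v ↔ G.Adj u v ∧ u ∈ s ∧ v ∈ s := by
  constructor
  · rintro ⟨-, u, v, hadj, rfl, rfl⟩
    exact ⟨hadj, u.2, v.2⟩
  · rintro ⟨hadj, hu, hv⟩
    exact ⟨hadj.ne, ⟨u, hu⟩, ⟨v, hv⟩, hadj, rfl, rfl⟩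

section EdgeWeight

variable {V 𝒳 : Type*} [Fintype V] [LinearOrder V]

theorem edgeWeight_congr (G : SimpleGraph V) [DecidableRel G.Adj] (Φ : V → V → 𝒳 → 𝒳 → ℝ)
    {z w : V → 𝒳} (h : ∀ a b, G.Adj a b → z a = w a) : edgeWeight G Φ z = edgeWeight G Φ w :=
  Finset.prod_congr rfl fun p hp => by
    have hadj : G.Adj p.1 p.2 := (Finset.mem_filter.1 hp).2.2
    rw [h _ _ hadj, h _ _ hadj.symm]

theorem edgeWeight_pos (G : SimpleGraph V) [DecidableRel G.Adj] {Φ : V → V → 𝒳 → 𝒳 → ℝ}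
    (hΦ : ∀ i j a b, 0 < Φ i j a b) (z : V → 𝒳) : 0 < edgeWeight G Φ z :=
  Finset.prod_pos fun _ _ => hΦ _ _ _ _

theorem edgeWeight_eq_mul_sdiff {G G' : SimpleGraph V} [DecidableRel G.Adj] [DecidableRel G'.Adj]
    (h : G' ≤ G) (Φ : V → V → 𝒳 → 𝒳 → ℝ) (z : V → 𝒳) :
    edgeWeight G Φ z = edgeWeight G' Φ z * edgeWeight (G \ G') Φ z := by
  rw [edgeWeight, ← Finset.prod_filter_mul_prod_filter_not _ (fun p => G'.Adj p.1 p.2),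
    Finset.filter_filter, Finset.filter_filter]
  congr 2 <;> refine Finset.filter_congr fun p _ => ?_
  · exact ⟨fun ⟨⟨hlt, _⟩, h'⟩ => ⟨hlt, h'⟩, fun ⟨hlt, h'⟩ => ⟨⟨hlt, h h'⟩, h'⟩⟩
  · simp only [SimpleGraph.sdiff_adj, and_assoc]

end EdgeWeight

theorem notMem_of_sdiff_spanningCoe_induce_adj {V : Type*} [Fintype V] [DecidableEq V]
    (G : SimpleGraph V) {A B C : Finset V} (hpart : A ∪ B ∪ C = Finset.univ)
    (hAB : Disjoint A B) (hsep : ∀ a ∈ A, ∀ c ∈ C, ∀ p : G.Walk a c, ∃ v ∈ B, v ∈ p.support)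
    {a b : V} (h : (G \ (G.induce (↑(A ∪ B) : Set V)).spanningCoe).Adj a b) : a ∉ A := by
  intro ha
  rw [SimpleGraph.sdiff_adj, SimpleGraph.spanningCoe_induce_adj] at h
  obtain ⟨hadj, h_not⟩ := h
  have hb : b ∉ A ∪ B := fun hb => h_not ⟨hadj, Finset.mem_union_left _ ha, hb⟩
  have hbC : b ∈ C := (Finset.mem_union.1 (hpart ▸ Finset.mem_univ b)).resolve_left hb
  obtain ⟨v, hvB, hv⟩ := hsep a ha b hbC hadj.toWalk
  rcases (by simpa using hv : v = a ∨ v = b) with rfl | rfl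
  · exact Finset.disjoint_left.1 hAB ha hvB
  · exact hb (Finset.mem_union_right _ hvB)

theorem stmt_4_general {V 𝒳 : Type*} [Fintype V] [LinearOrder V] [Fintype 𝒳] [DecidableEq 𝒳]
    (G : SimpleGraph V) [DecidableRel G.Adj]
    (Φ : V → V → 𝒳 → 𝒳 → ℝ) (hΦ : ∀ i j a b, 0 < Φ i j a b)
    (A B C : Finset V)
    (hpart : A ∪ B ∪ C = Finset.univ)
    (hAB : Disjoint A B)
    (hsep : ∀ a ∈ A, ∀ c ∈ C, ∀ p : G.Walk a c, ∃ v ∈ B, v ∈ p.support)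
    (D : Finset V) (hD : D ⊆ A) (x : V → 𝒳) :
    mgw (edgeWeight G Φ) (D ∪ B) x / mgw (edgeWeight G Φ) B x =
      mgw (edgeWeight (G.induce (↑(A ∪ B) : Set V)).spanningCoe Φ) (D ∪ B) x /
        mgw (edgeWeight (G.induce (↑(A ∪ B) : Set V)).spanningCoe Φ) B x := by
  set G' := (G.induce (↑(A ∪ B) : Set V)).spanningCoe
  have h_split : edgeWeight G Φ = fun z => edgeWeight G' Φ z * edgeWeight (G \ G') Φ z :=
    funext (edgeWeight_eq_mul_sdiff (G.spanningCoe_induce_le _) Φ)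
  have hS : A ∪ (D ∪ B) = A ∪ B := by rw [← Finset.union_assoc, Finset.union_eq_left.2 hD]
  rw [h_split]
  refine mgw_mul_div_mgw_mul A hS ?_ ?_ (edgeWeight_pos _ hΦ) x
  · refine fun z w h => edgeWeight_congr _ Φ fun a b hab => h a ?_
    exact hS ▸ Finset.mem_coe.1 (SimpleGraph.spanningCoe_induce_adj.1 hab).2.1
  · exact fun z w h => edgeWeight_congr _ Φ fun a b hab =>
      h a (notMem_of_sdiff_spanningCoe_induce_adj G hpart hAB hsep hab)

/-- Markov-blanket restriction lemma: if `A, B, C` partition `V`, `B` separates `A` from `C`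
in `G`, `P` is the graphical model on `G` with strictly positive edge potentials `Φ`, and `P̃`
is the model on the subgraph induced by `A ∪ B` with the same potentials, then for every
`D ⊆ A` and every configuration `x`, `P(x_D | x_B) = P̃(x_D | x_B)`. -/
theorem stmt_4 {V 𝒳 : Type*} [Fintype V] [LinearOrder V] [Fintype 𝒳] [DecidableEq 𝒳]
    (G : SimpleGraph V) [DecidableRel G.Adj]
    (Φ : V → V → 𝒳 → 𝒳 → ℝ) (hΦ : ∀ i j a b, 0 < Φ i j a b)
    (A B C : Finset V)
    (hpart : A ∪ B ∪ C = Finset.univ)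
    (hAB : Disjoint A B) (hAC : Disjoint A C) (hBC : Disjoint B C)
    (hsep : ∀ a ∈ A, ∀ c ∈ C, ∀ p : G.Walk a c, ∃ v ∈ B, v ∈ p.support)
    (D : Finset V) (hD : D ⊆ A) (x : V → 𝒳) :
    mgw (edgeWeight G Φ) (D ∪ B) x / mgw (edgeWeight G Φ) B x =
      mgw (edgeWeight (G.induce (↑(A ∪ B) : Set V)).spanningCoe Φ) (D ∪ B) x /
        mgw (edgeWeight (G.induce (↑(A ∪ B) : Set V)).spanningCoe Φ) B x :=
  stmt_4_general G Φ hΦ A B C hpart hAB hsep D hD x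
end

section
/- In a tree Ising model with root r, leaves L, and all positive edge parameters θ_{ij} > 0, the quantity P(X_r = 1 | X_L = x_L) is monotonically non-decreasing in each coordinate x_l of x_L (flipping any leaf from −1 to +1 does not decrease it). -/
/-!
For `θ ≥ 0` the Ising weight is log-supermodular on the distributive lattice of configurations,
since `x₁y₁ + x₂y₂ ≤ (x₁ ⊓ x₂)(y₁ ⊓ y₂) + (x₁ ⊔ x₂)(y₁ ⊔ y₂)` for spins. Writing `Z(u, b)` for the
weight of the configurations equal to `u` on `L` with root spin `b`, the four functions theorem
gives `Z(u, +) Z(u', −) ≤ Z(u, −) Z(u', +)` whenever `u ≤ u'`, which is the monotonicity of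
`Z(u, +) / (Z(u, +) + Z(u, −))` in the boundary condition `u`.
-/

/-- Spin value of a Boolean configuration entry: `true ↦ +1`, `false ↦ −1`. -/
noncomputable def val (b : Bool) : ℝ := if b then 1 else -1

/-- Unnormalized Ising weight `∏_{edges {u,v}} exp(θ_{uv} x_u x_v)` of a configuration. -/
noncomputable def isingWeight {V : Type*} [Fintype V] [LinearOrder V]
    (G : SimpleGraph V) [DecidableRel G.Adj] (θ : V → V → ℝ) (σ : V → Bool) : ℝ :=
  ∏ p ∈ Finset.univ.filter (fun p : V × V => p.1 < p.2 ∧ G.Adj p.1 p.2),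
    Real.exp (θ p.1 p.2 * val (σ p.1) * val (σ p.2))

/-- Conditional probability `P(X_r = b | X_L = y|_L)` in the Ising model on `G`. -/
noncomputable def condRootProb {V : Type*} [Fintype V] [LinearOrder V]
    (G : SimpleGraph V) [DecidableRel G.Adj] (θ : V → V → ℝ)
    (r : V) (L : Finset V) (b : Bool) (y : V → Bool) : ℝ :=
  (∑ σ : V → Bool, if (∀ v ∈ L, σ v = y v) ∧ σ r = b then isingWeight G θ σ else 0) /
    (∑ σ : V → Bool, if ∀ v ∈ L, σ v = y v then isingWeight G θ σ else 0)

open scoped FinsetFamily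

lemma sum_mul_sum_le_of_infs_subset_of_sups_subset {α : Type*} [DistribLattice α]
    [DecidableEq α] {w : α → ℝ} (hw₀ : 0 ≤ w) (hw : ∀ a b, w a * w b ≤ w (a ⊓ b) * w (a ⊔ b))
    {s t s' t' : Finset α} (hs' : s ⊼ t ⊆ s') (ht' : s ⊻ t ⊆ t') :
    (∑ a ∈ s, w a) * ∑ a ∈ t, w a ≤ (∑ a ∈ s', w a) * ∑ a ∈ t', w a :=
  (four_functions_theorem w w w w hw₀ hw₀ hw₀ hw₀ hw s t).trans <|
    mul_le_mul (Finset.sum_le_sum_of_subset_of_nonneg hs' fun a _ _ => hw₀ a)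
      (Finset.sum_le_sum_of_subset_of_nonneg ht' fun a _ _ => hw₀ a)
      (Finset.sum_nonneg fun a _ => hw₀ a) (Finset.sum_nonneg fun a _ => hw₀ a)

lemma val_mul_val_add_val_mul_val_le (a b c d : Bool) :
    val a * val b + val c * val d ≤ val (a ⊓ c) * val (b ⊓ d) + val (a ⊔ c) * val (b ⊔ d) := by
  cases a <;> cases b <;> cases c <;> cases d <;> norm_num [val]

section Ising

variable {V : Type*} [Fintype V] [LinearOrder V] (G : SimpleGraph V) [DecidableRel G.Adj]
  (θ : V → V → ℝ)

lemma isingWeight_pos (σ : V → Bool) : 0 < isingWeight G θ σ :=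
  Finset.prod_pos fun _ _ => Real.exp_pos _

variable {θ} in
lemma isingWeight_mul_le_inf_mul_sup (hθ : ∀ i j, G.Adj i j → 0 ≤ θ i j) (σ τ : V → Bool) :
    isingWeight G θ σ * isingWeight G θ τ ≤
      isingWeight G θ (σ ⊓ τ) * isingWeight G θ (σ ⊔ τ) := by
  simp only [isingWeight, ← Finset.prod_mul_distrib, ← Real.exp_add]
  refine Finset.prod_le_prod (fun _ _ => by positivity) fun p hp => Real.exp_le_exp.2 ?_
  have hθp := hθ _ _ (Finset.mem_filter.1 hp).2.2
  simp only [Pi.inf_apply, Pi.sup_apply, mul_assoc, ← mul_add]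
  exact mul_le_mul_of_nonneg_left (val_mul_val_add_val_mul_val_le _ _ _ _) hθp

/-- `Z(u, b) = ∑_{σ|_L = u|_L, σ_r = b} w(σ)`, the numerator of `P(X_r = b | X_L = u|_L)`. -/
noncomputable def pinnedPartitionFn (r : V) (L : Finset V) (u : V → Bool) (b : Bool) : ℝ :=
  ∑ σ ∈ Finset.univ.filter (fun σ : V → Bool => (∀ v ∈ L, σ v = u v) ∧ σ r = b),
    isingWeight G θ σ

lemma condRootProb_true_eq (r : V) (L : Finset V) (u : V → Bool) :
    condRootProb G θ r L true u = pinnedPartitionFn G θ r L u true /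
      (pinnedPartitionFn G θ r L u true + pinnedPartitionFn G θ r L u false) := by
  simp only [condRootProb, pinnedPartitionFn, Finset.sum_filter, ← Finset.sum_add_distrib]
  congr 1
  refine Finset.sum_congr rfl fun σ _ => ?_
  cases σ r <;> simp

lemma pinnedPartitionFn_nonneg (r : V) (L : Finset V) (u : V → Bool) (b : Bool) :
    0 ≤ pinnedPartitionFn G θ r L u b :=
  Finset.sum_nonneg fun σ _ => (isingWeight_pos G θ σ).le

lemma pinnedPartitionFn_self_pos (r : V) (L : Finset V) (u : V → Bool) :
    0 < pinnedPartitionFn G θ r L u (u r) :=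
  Finset.sum_pos (fun σ _ => isingWeight_pos G θ σ) ⟨u, by simp⟩

lemma pinnedPartitionFn_add_pos (r : V) (L : Finset V) (u : V → Bool) :
    0 < pinnedPartitionFn G θ r L u true + pinnedPartitionFn G θ r L u false := by
  have hpos := pinnedPartitionFn_self_pos G θ r L u
  cases hr : u r <;> rw [hr] at hpos
  · exact add_pos_of_nonneg_of_pos (pinnedPartitionFn_nonneg G θ r L u true) hpos
  · exact add_pos_of_pos_of_nonneg hpos (pinnedPartitionFn_nonneg G θ r L u false)

variable {θ} in
/-- For `u ≤ u'`, meets of `(u, true)`- and `(u', false)`-pinned configurations are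
`(u, false)`-pinned and their joins `(u', true)`-pinned. -/
lemma pinnedPartitionFn_mul_le (hθ : ∀ i j, G.Adj i j → 0 ≤ θ i j) (r : V) (L : Finset V)
    {u u' : V → Bool} (hu : u ≤ u') :
    pinnedPartitionFn G θ r L u true * pinnedPartitionFn G θ r L u' false ≤
      pinnedPartitionFn G θ r L u false * pinnedPartitionFn G θ r L u' true := by
  refine sum_mul_sum_le_of_infs_subset_of_sups_subset (fun σ => (isingWeight_pos G θ σ).le)
    (isingWeight_mul_le_inf_mul_sup G hθ) ?_ ?_
  · intro σ hσ
    obtain ⟨a, ha, b, hb, rfl⟩ := Finset.mem_infs.1 hσ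
    simp only [Finset.mem_filter, Finset.mem_univ, true_and] at ha hb ⊢
    refine ⟨fun v hv => ?_, by simp [ha.2, hb.2]⟩
    simp [ha.1 v hv, hb.1 v hv, hu v]
  · intro σ hσ
    obtain ⟨a, ha, b, hb, rfl⟩ := Finset.mem_sups.1 hσ
    simp only [Finset.mem_filter, Finset.mem_univ, true_and] at ha hb ⊢
    refine ⟨fun v hv => ?_, by simp [ha.2, hb.2]⟩
    simp [ha.1 v hv, hb.1 v hv, hu v]

variable {θ} in
lemma condRootProb_true_mono (hθ : ∀ i j, G.Adj i j → 0 ≤ θ i j) (r : V) (L : Finset V)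
    {u u' : V → Bool} (hu : u ≤ u') :
    condRootProb G θ r L true u ≤ condRootProb G θ r L true u' := by
  rw [condRootProb_true_eq, condRootProb_true_eq,
    div_le_div_iff₀ (pinnedPartitionFn_add_pos G θ r L u) (pinnedPartitionFn_add_pos G θ r L u')]
  linear_combination pinnedPartitionFn_mul_le G hθ r L hu

end Ising

theorem stmt_6_general {V : Type*} [Fintype V] [LinearOrder V]
    (G : SimpleGraph V) [DecidableRel G.Adj]
    (r : V) (L : Finset V)
    (θ : V → V → ℝ) (hθ : ∀ i j, G.Adj i j → 0 < θ i j)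
    (l : V) (y : V → Bool) :
    condRootProb G θ r L true (Function.update y l false) ≤
      condRootProb G θ r L true (Function.update y l true) :=
  condRootProb_true_mono G (fun i j hij => (hθ i j hij).le) r L
    (Function.update_mono (Bool.false_le true))

/-- In a tree Ising model with root `r`, leaf set `L`, and all positive edge parameters,
`P(X_r = 1 | X_L = x_L)` is monotonically non-decreasing in each leaf value `x_l`:
flipping any leaf `l` from `−1` (`false`) to `+1` (`true`) does not decrease it. -/
theorem stmt_6 {V : Type*} [Fintype V] [LinearOrder V]
    (G : SimpleGraph V) [DecidableRel G.Adj] (hT : G.IsTree)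
    (r : V) (L : Finset V) (hL : ∀ v, v ∈ L ↔ v ≠ r ∧ G.degree v = 1)
    (θ : V → V → ℝ) (hθ : ∀ i j, G.Adj i j → 0 < θ i j)
    (l : V) (hl : l ∈ L) (y : V → Bool) :
    condRootProb G θ r L true (Function.update y l false) ≤
      condRootProb G θ r L true (Function.update y l true) :=
  stmt_6_general G r L θ hθ l y
end

section
/- In a tree Ising model with all positive edge parameters, P(X_r = 1 | X_L = 1) (all leaves set to +1) is monotonically non-decreasing in each edge parameter θ_{ij}. -/
/-!
Only the factor `exp (θᵢⱼ xᵢ xⱼ)` of the weight depends on `θᵢⱼ`. Let `N±` (resp. `M±`) be the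
weights, in the graph with the edge `{i, j}` removed, of the pinned configurations with `x_r = +1`
(resp. `x_r = -1`) and `xᵢ xⱼ = ±1`. Then the conditional probability is
`(e^θ N₊ + e^{-θ} N₋) / (e^θ (N₊ + M₊) + e^{-θ} (N₋ + M₋))`, which is non-decreasing in `θ` as
soon as `N₋ M₊ ≤ N₊ M₋`.

Removing the edge cuts the tree into the component of `i`, which we may assume contains `r`, and
the component of `j`; the weight factorises accordingly. Summing out the two sides separately,
`N₊ M₋ - N₋ M₊` becomes a positive multiple of `(a₊₊ a₋₋ - a₊₋ a₋₊) (b₊² - b₋²)`, where `a_{st}`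
is the weight of `x_r = s, xᵢ = t` on the side of `i` and `b_u` that of `xⱼ = u` on the side of
`j`. Ferromagnetic weights are log-supermodular, so the Ahlswede–Daykin four functions theorem
makes the first factor nonnegative; combined with the spin-flip symmetry it also gives `b₋ ≤ b₊`,
i.e. `P(Xⱼ = 1 | leaves = 1) ≥ 1/2`.
-/

section FiniteSums

open Finset

lemma sum_filter_eq_add_sum_filter {α M : Type*} [Fintype α] [AddCommMonoid M]
    {P Q R : α → Prop} [DecidablePred P] [DecidablePred Q] [DecidablePred R] (f : α → M)
    (h : ∀ a, P a ↔ Q a ∨ R a) (hQR : ∀ a, Q a → ¬ R a) :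
    ∑ a with P a, f a = ∑ a with Q a, f a + ∑ a with R a, f a := by
  classical
  rw [← sum_union (disjoint_filter.2 fun a _ => hQR a), ← filter_or]
  exact sum_congr (filter_congr fun a _ => h a) fun _ _ => rfl

lemma dependsOn_forall_mem_eq {V β : Type*} {K : Finset V} {T : Set V} (hK : ∀ v ∈ K, v ∈ T)
    (c : β) : DependsOn (fun σ : V → β => ∀ v ∈ K, σ v = c) T := fun σ τ h =>
  propext <| forall₂_congr fun v hv => by rw [h v (hK v hv)]

variable {X β R : Type*} [Fintype X] [DecidableEq X] [Fintype β] [CommSemiring R]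

theorem sum_mul_sum_eq_card_smul_sum_mul {S : Set X} {F G : (X → β) → R}
    (hF : DependsOn F S) (hG : DependsOn G Sᶜ) :
    (∑ σ, F σ) * ∑ σ, G σ = Fintype.card (X → β) • ∑ σ, F σ * G σ := by
  classical
  let splice : (X → β) × (X → β) → (X → β) × (X → β) := fun x =>
    (S.piecewise x.1 x.2, S.piecewise x.2 x.1)
  have hsplice : Function.Involutive splice := fun x => by
    ext v <;> by_cases hv : v ∈ S <;> simp [splice, hv]
  calc (∑ σ, F σ) * ∑ σ, G σ
      = ∑ x : (X → β) × (X → β), F (splice x).1 * G (splice x).1 := by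
        rw [sum_mul_sum, ← Fintype.sum_prod_type']
        refine sum_congr rfl fun x _ => ?_
        rw [hF (x := x.1) (y := (splice x).1) fun v hv => by simp [splice, hv],
          hG (x := x.2) (y := (splice x).1) fun v hv => by simp_all [splice]]
    _ = ∑ x : (X → β) × (X → β), F x.1 * G x.1 :=
        Equiv.sum_comp hsplice.toPerm fun x => F x.1 * G x.1
    _ = Fintype.card (X → β) • ∑ σ, F σ * G σ := by
        rw [Fintype.sum_prod_type, sum_comm]
        simp

theorem sum_filter_mul_sum_filter_eq_card_smul {S : Set X} {P Q : (X → β) → Prop}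
    [DecidablePred P] [DecidablePred Q] {F G : (X → β) → R} (hP : DependsOn P S)
    (hF : DependsOn F S) (hQ : DependsOn Q Sᶜ) (hG : DependsOn G Sᶜ) :
    (∑ σ with P σ, F σ) * ∑ σ with Q σ, G σ =
      Fintype.card (X → β) • ∑ σ with P σ ∧ Q σ, F σ * G σ := by
  simp only [sum_filter, ← ite_zero_mul_ite_zero]
  exact sum_mul_sum_eq_card_smul_sum_mul (S := S) (fun σ τ h => by simp only [hP h, hF h])
    fun σ τ h => by simp only [hQ h, hG h]

end FiniteSums

section LogSupermodular

open Finset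
open scoped FinsetFamily

variable {α : Type*} [DistribLattice α]

def IsLogSupermodular (w : α → ℝ) : Prop :=
  ∀ a b, w a * w b ≤ w (a ⊓ b) * w (a ⊔ b)

lemma isLogSupermodular_prod {ι : Type*} (s : Finset ι) {w : ι → α → ℝ}
    (h0 : ∀ k ∈ s, 0 ≤ w k) (hw : ∀ k ∈ s, IsLogSupermodular (w k)) :
    IsLogSupermodular fun a => ∏ k ∈ s, w k a := by
  intro a b
  simp only [← prod_mul_distrib]
  exact prod_le_prod (fun k hk => mul_nonneg (h0 k hk a) (h0 k hk b)) fun k hk => hw k hk a b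

variable [Fintype α]

theorem IsLogSupermodular.sum_filter_mul_sum_filter_le {w : α → ℝ} (hw : IsLogSupermodular w)
    (h0 : 0 ≤ w) {P₁ P₂ P₃ P₄ : α → Prop} [DecidablePred P₁] [DecidablePred P₂]
    [DecidablePred P₃] [DecidablePred P₄] (h : ∀ a b, P₁ a → P₂ b → P₃ (a ⊓ b) ∧ P₄ (a ⊔ b)) :
    (∑ a with P₁ a, w a) * ∑ a with P₂ a, w a ≤ (∑ a with P₃ a, w a) * ∑ a with P₄ a, w a := by
  classical
  have hsub {s : Finset α} {P : α → Prop} [DecidablePred P] (hs : ∀ a ∈ s, P a) :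
      ∑ a ∈ s, w a ≤ ∑ a with P a, w a :=
    sum_le_sum_of_subset_of_nonneg (fun a ha => mem_filter.2 ⟨mem_univ a, hs a ha⟩)
      fun a _ _ => h0 a
  calc (∑ a with P₁ a, w a) * ∑ a with P₂ a, w a
      ≤ (∑ a ∈ univ.filter P₁ ⊼ univ.filter P₂, w a) * ∑ a ∈ univ.filter P₁ ⊻ univ.filter P₂, w a :=
        four_functions_theorem w w w w h0 h0 h0 h0 hw _ _
    _ ≤ (∑ a with P₃ a, w a) * ∑ a with P₄ a, w a := by
        refine mul_le_mul (hsub ?_) (hsub ?_) (sum_nonneg fun a _ => h0 a)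
          (sum_nonneg fun a _ => h0 a)
        · simp only [forall_infs_iff, mem_filter, mem_univ, true_and]
          exact fun a ha b hb => (h a b ha hb).1
        · simp only [forall_sups_iff, mem_filter, mem_univ, true_and]
          exact fun a ha b hb => (h a b ha hb).2

end LogSupermodular

section Spins

open Real

variable {V : Type*}

lemma val_not (b : Bool) : val (!b) = -val b := by
  cases b <;> norm_num [val]

lemma val_mul_val (a b : Bool) : val a * val b = if a = b then 1 else -1 := by
  cases a <;> cases b <;> norm_num [val]

lemma isLogSupermodular_exp_mul_val_mul_val {t : ℝ} (ht : 0 ≤ t) (u v : V) :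
    IsLogSupermodular fun σ : V → Bool => exp (t * val (σ u) * val (σ v)) := by
  intro σ τ
  simp only [Pi.inf_apply, Pi.sup_apply, ← exp_add, exp_le_exp]
  cases σ u <;> cases σ v <;> cases τ u <;> cases τ v <;> norm_num [val] <;> linarith

noncomputable def isingWeightOn (θ : V → V → ℝ) (E : Finset (V × V)) (σ : V → Bool) : ℝ :=
  ∏ p ∈ E, exp (θ p.1 p.2 * val (σ p.1) * val (σ p.2))

variable (θ : V → V → ℝ) (E : Finset (V × V))

lemma isingWeightOn_pos (σ : V → Bool) : 0 < isingWeightOn θ E σ :=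
  Finset.prod_pos fun _ _ => exp_pos _

lemma isLogSupermodular_isingWeightOn (hθ : ∀ p ∈ E, 0 ≤ θ p.1 p.2) :
    IsLogSupermodular (isingWeightOn θ E) :=
  isLogSupermodular_prod E (fun _ _ _ => (exp_pos _).le)
    fun p hp => isLogSupermodular_exp_mul_val_mul_val (hθ p hp) p.1 p.2

lemma isingWeightOn_not (σ : V → Bool) :
    isingWeightOn θ E (fun v => !σ v) = isingWeightOn θ E σ := by
  simp only [isingWeightOn, val_not, mul_neg, neg_mul, neg_neg]

lemma dependsOn_isingWeightOn {S : Set V} (hS : ∀ p ∈ E, p.1 ∈ S ∧ p.2 ∈ S) :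
    DependsOn (isingWeightOn θ E) S := fun σ τ h =>
  Finset.prod_congr rfl fun p hp => by rw [h p.1 (hS p hp).1, h p.2 (hS p hp).2]

lemma isingWeightOn_congr {θ' : V → V → ℝ} (h : ∀ p ∈ E, θ' p.1 p.2 = θ p.1 p.2) :
    isingWeightOn θ' E = isingWeightOn θ E :=
  funext fun _ => Finset.prod_congr rfl fun p hp => by rw [h p hp]

end Spins

section Correlation

open Finset

variable {V : Type*} [Fintype V] [DecidableEq V]

lemma sum_filter_not_eq_of_invariant {w : (V → Bool) → ℝ} (hflip : ∀ σ, w (fun v => !σ v) = w σ)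
    (P : (V → Bool) → Prop) [DecidablePred P] :
    ∑ σ with P (fun v => !σ v), w σ = ∑ σ with P σ, w σ := by
  have hnot : Function.Involutive fun (σ : V → Bool) v => !σ v := fun σ => funext fun v => by simp
  simp only [sum_filter]
  exact Fintype.sum_equiv hnot.toPerm _ _ fun σ => by simp [hflip]

theorem IsLogSupermodular.sum_filter_false_le_sum_filter_true {w : (V → Bool) → ℝ}
    (hw : IsLogSupermodular w) (h0 : 0 ≤ w) (hflip : ∀ σ, w (fun v => !σ v) = w σ)
    (K : Finset V) (j : V) :
    ∑ σ with (∀ v ∈ K, σ v = true) ∧ σ j = false, w σ ≤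
      ∑ σ with (∀ v ∈ K, σ v = true) ∧ σ j = true, w σ := by
  have hflipped (u : Bool) : ∑ σ with (∀ v ∈ K, σ v = false) ∧ σ j = u, w σ =
      ∑ σ with (∀ v ∈ K, σ v = true) ∧ σ j = !u, w σ := by
    rw [← sum_filter_not_eq_of_invariant hflip]
    simp only [Bool.not_eq_eq_eq_not, Bool.not_false]
  have key := hw.sum_filter_mul_sum_filter_le h0
    (P₁ := fun σ => (∀ v ∈ K, σ v = true) ∧ σ j = false)
    (P₂ := fun σ => (∀ v ∈ K, σ v = false) ∧ σ j = true)
    (P₃ := fun σ => (∀ v ∈ K, σ v = false) ∧ σ j = false)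
    (P₄ := fun σ => (∀ v ∈ K, σ v = true) ∧ σ j = true)
    fun σ τ hσ hτ => by simp_all
  rw [hflipped, hflipped, Bool.not_true, Bool.not_false] at key
  exact (mul_self_le_mul_self_iff (sum_nonneg fun σ _ => h0 σ)
    (sum_nonneg fun σ _ => h0 σ)).2 key

theorem sum_ne_mul_sum_eq_le_of_cut {S : Set V} [DecidablePred (· ∈ S)]
    {W WS WC : (V → Bool) → ℝ} (hW : W = WS * WC)
    (hWS : IsLogSupermodular WS) (hWS0 : 0 ≤ WS) (hWSS : DependsOn WS S)
    (hWC : IsLogSupermodular WC) (hWC0 : 0 ≤ WC) (hWCS : DependsOn WC Sᶜ)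
    (hflip : ∀ σ, WC (fun v => !σ v) = WC σ)
    (L : Finset V) {r i j : V} (hr : r ∈ S) (hi : i ∈ S) (hj : j ∉ S) :
    (∑ σ with (∀ v ∈ L, σ v = true) ∧ σ r = true ∧ σ i ≠ σ j, W σ) *
        ∑ σ with (∀ v ∈ L, σ v = true) ∧ σ r = false ∧ σ i = σ j, W σ ≤
      (∑ σ with (∀ v ∈ L, σ v = true) ∧ σ r = true ∧ σ i = σ j, W σ) *
        ∑ σ with (∀ v ∈ L, σ v = true) ∧ σ r = false ∧ σ i ≠ σ j, W σ := by
  set a : Bool → Bool → ℝ := fun s t =>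
    ∑ σ with (∀ v ∈ {v ∈ L | v ∈ S}, σ v = true) ∧ σ r = s ∧ σ i = t, WS σ
  set b : Bool → ℝ := fun u => ∑ σ with (∀ v ∈ {v ∈ L | v ∉ S}, σ v = true) ∧ σ j = u, WC σ
  set κ : ℝ := (Fintype.card (V → Bool) : ℝ)
  have hab (s t u : Bool) : a s t * b u = κ * ∑ σ with
      ((∀ v ∈ {v ∈ L | v ∈ S}, σ v = true) ∧ σ r = s ∧ σ i = t) ∧
        ((∀ v ∈ {v ∈ L | v ∉ S}, σ v = true) ∧ σ j = u), W σ := by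
    rw [← nsmul_eq_mul, hW]
    refine sum_filter_mul_sum_filter_eq_card_smul (S := S) ?_ hWSS ?_ hWCS
    · intro σ τ h
      simp only [dependsOn_forall_mem_eq (fun v hv => (mem_filter.1 hv).2) true h, h r hr, h i hi]
    · intro σ τ h
      simp only [dependsOn_forall_mem_eq (K := {v ∈ L | v ∉ S}) (T := Sᶜ)
        (fun v hv => (mem_filter.1 hv).2) true h, h j hj]
  have hpin (σ : V → Bool) : (∀ v ∈ L, σ v = true) ↔
      (∀ v ∈ {v ∈ L | v ∈ S}, σ v = true) ∧ ∀ v ∈ {v ∈ L | v ∉ S}, σ v = true := by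
    rw [← forall_mem_union, filter_union_filter_not_eq]
  have hsplit (s : Bool) :
      κ * ∑ σ with (∀ v ∈ L, σ v = true) ∧ σ r = s ∧ σ i = σ j, W σ =
        a s true * b true + a s false * b false ∧
      κ * ∑ σ with (∀ v ∈ L, σ v = true) ∧ σ r = s ∧ σ i ≠ σ j, W σ =
        a s true * b false + a s false * b true := by
    constructor <;>
    · rw [hab, hab, ← mul_add]
      congr 1
      refine sum_filter_eq_add_sum_filter W (fun σ => ?_) fun σ h h' => by simp_all
      rw [hpin]
      cases σ i <;> cases σ j <;> simp <;> tauto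
  have ha : a true false * a false true ≤ a false false * a true true :=
    hWS.sum_filter_mul_sum_filter_le hWS0 fun σ τ hσ hτ => by simp_all
  have hb : b false ≤ b true := hWC.sum_filter_false_le_sum_filter_true hWC0 hflip _ j
  have hb0 : 0 ≤ b false := sum_nonneg fun σ _ => hWC0 σ
  have hprod : 0 ≤ (a false false * a true true - a true false * a false true) *
      (b true * b true - b false * b false) :=
    mul_nonneg (sub_nonneg.2 ha) (sub_nonneg.2 (mul_self_le_mul_self hb0 hb))
  have hκ : 0 < κ := by positivity
  -- after multiplying by `κ²`, the difference of the two sides is `hprod`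
  rw [← mul_le_mul_iff_of_pos_left (mul_pos hκ hκ), mul_mul_mul_comm κ κ, mul_mul_mul_comm κ κ,
    (hsplit true).2, (hsplit false).1, (hsplit true).1, (hsplit false).2]
  linear_combination hprod

end Correlation

section IsingOnGraphs

open Finset SimpleGraph Real

variable {V : Type*} [Fintype V] [LinearOrder V]

def edgePairs (G : SimpleGraph V) [DecidableRel G.Adj] : Finset (V × V) :=
  {p | p.1 < p.2 ∧ G.Adj p.1 p.2}

variable (G : SimpleGraph V) [DecidableRel G.Adj] (θ : V → V → ℝ)

lemma isingWeight_eq_isingWeightOn : isingWeight G θ = isingWeightOn θ (edgePairs G) := rfl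

lemma isingWeight_congr {θ' : V → V → ℝ} (h : ∀ u v, G.Adj u v → θ' u v = θ u v) :
    isingWeight G θ' = isingWeight G θ :=
  isingWeightOn_congr θ _ fun p hp => h p.1 p.2 (mem_filter.1 hp).2.2

lemma edgePairs_deleteEdges (i j : V) :
    edgePairs (G.deleteEdges {s(i, j)}) = (edgePairs G).erase (min i j, max i j) := by
  ext ⟨u, v⟩
  simp only [edgePairs, mem_filter, mem_univ, true_and, mem_erase, deleteEdges_adj,
    Set.mem_singleton_iff, Sym2.eq_iff, ne_eq, Prod.mk.injEq]
  rcases le_total i j with h | h <;> simp only [h, min_eq_left, max_eq_right, min_eq_right,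
    max_eq_left] <;> grind

lemma isingWeight_eq_exp_mul_isingWeight_deleteEdges {i j : V} (hij : G.Adj i j)
    (σ : V → Bool) : isingWeight G θ σ = exp (θ (min i j) (max i j) * (val (σ i) * val (σ j))) *
      isingWeight (G.deleteEdges {s(i, j)}) θ σ := by
  have he : (min i j, max i j) ∈ edgePairs G := by
    rcases lt_or_gt_of_ne hij.ne with h | h <;> simp [edgePairs, h, h.le, hij, hij.symm]
  rw [isingWeight_eq_isingWeightOn, isingWeight_eq_isingWeightOn, edgePairs_deleteEdges,
    isingWeightOn, isingWeightOn, ← mul_prod_erase _ _ he]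
  rcases le_total i j with h | h <;>
    simp only [h, min_eq_left, max_eq_right, min_eq_right, max_eq_left] <;> congr 2 <;> ring

lemma sum_filter_isingWeight_eq {i j : V} (hij : G.Adj i j) (P : (V → Bool) → Prop)
    [DecidablePred P] :
    ∑ σ with P σ, isingWeight G θ σ =
      exp (θ (min i j) (max i j)) *
          ∑ σ with P σ ∧ σ i = σ j, isingWeight (G.deleteEdges {s(i, j)}) θ σ +
        exp (-θ (min i j) (max i j)) *
          ∑ σ with P σ ∧ σ i ≠ σ j, isingWeight (G.deleteEdges {s(i, j)}) θ σ := by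
  rw [sum_filter_eq_add_sum_filter (Q := fun σ => P σ ∧ σ i = σ j)
    (R := fun σ => P σ ∧ σ i ≠ σ j) _ (fun σ => by tauto) fun σ h h' => h'.2 h.2, mul_sum,
    mul_sum]
  congr 1 <;> refine sum_congr rfl fun σ hσ => ?_ <;>
    rw [isingWeight_eq_exp_mul_isingWeight_deleteEdges G θ hij, val_mul_val] <;>
    simp_all

theorem sum_ne_mul_sum_eq_le_of_not_reachable (hθ : ∀ u v, G.Adj u v → 0 ≤ θ u v)
    (L : Finset V) {r i j : V} (hr : G.Reachable i r) (hj : ¬ G.Reachable i j) :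
    (∑ σ with (∀ v ∈ L, σ v = true) ∧ σ r = true ∧ σ i ≠ σ j, isingWeight G θ σ) *
        ∑ σ with (∀ v ∈ L, σ v = true) ∧ σ r = false ∧ σ i = σ j, isingWeight G θ σ ≤
      (∑ σ with (∀ v ∈ L, σ v = true) ∧ σ r = true ∧ σ i = σ j, isingWeight G θ σ) *
        ∑ σ with (∀ v ∈ L, σ v = true) ∧ σ r = false ∧ σ i ≠ σ j, isingWeight G θ σ := by
  classical
  set S : Set V := {v | G.Reachable i v}
  have hS (p) (hp : p ∈ edgePairs G) : p.1 ∈ S ↔ p.2 ∈ S :=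
    have hadj := (mem_filter.1 hp).2.2
    ⟨fun h => h.trans hadj.reachable, fun h => h.trans hadj.symm.reachable⟩
  have hin (p) (hp : p ∈ {p ∈ edgePairs G | p.1 ∈ S}) : p.1 ∈ S ∧ p.2 ∈ S := by
    rw [mem_filter] at hp
    exact ⟨hp.2, (hS p hp.1).1 hp.2⟩
  have hout (p) (hp : p ∈ {p ∈ edgePairs G | p.1 ∉ S}) : p.1 ∈ Sᶜ ∧ p.2 ∈ Sᶜ := by
    rw [mem_filter] at hp
    exact ⟨hp.2, mt (hS p hp.1).2 hp.2⟩
  have hθE (p) (hp : p ∈ edgePairs G) : 0 ≤ θ p.1 p.2 := hθ _ _ (mem_filter.1 hp).2.2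
  exact sum_ne_mul_sum_eq_le_of_cut (S := S)
    (WS := isingWeightOn θ {p ∈ edgePairs G | p.1 ∈ S})
    (WC := isingWeightOn θ {p ∈ edgePairs G | p.1 ∉ S})
    (funext fun σ => (prod_filter_mul_prod_filter_not _ _ _).symm)
    (isLogSupermodular_isingWeightOn _ _ fun p hp => hθE p (filter_subset _ _ hp))
    (fun σ => (isingWeightOn_pos _ _ σ).le) (dependsOn_isingWeightOn _ _ hin)
    (isLogSupermodular_isingWeightOn _ _ fun p hp => hθE p (filter_subset _ _ hp))
    (fun σ => (isingWeightOn_pos _ _ σ).le) (dependsOn_isingWeightOn _ _ hout)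
    (isingWeightOn_not _ _) L hr Reachable.rfl hj

lemma condRootProb_eq_div (r : V) (L : Finset V) :
    condRootProb G θ r L true (fun _ => true) =
      (∑ σ with (∀ v ∈ L, σ v = true) ∧ σ r = true, isingWeight G θ σ) /
        ((∑ σ with (∀ v ∈ L, σ v = true) ∧ σ r = true, isingWeight G θ σ) +
          ∑ σ with (∀ v ∈ L, σ v = true) ∧ σ r = false, isingWeight G θ σ) := by
  rw [← sum_filter_eq_add_sum_filter (P := fun σ => ∀ v ∈ L, σ v = true) _
    (fun σ => by cases σ r <;> simp) fun σ h h' => by simp_all, condRootProb]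
  simp only [sum_filter]

lemma sum_pinned_isingWeight_pos (r : V) (L : Finset V) :
    0 < (∑ σ with (∀ v ∈ L, σ v = true) ∧ σ r = true, isingWeight G θ σ) +
      ∑ σ with (∀ v ∈ L, σ v = true) ∧ σ r = false, isingWeight G θ σ :=
  add_pos_of_pos_of_nonneg (sum_pos (fun σ _ => isingWeightOn_pos _ _ σ) ⟨fun _ => true, by simp⟩)
    (sum_nonneg fun σ _ => (isingWeightOn_pos _ _ σ).le)

end IsingOnGraphs

open Real in
lemma exp_ratio_le_exp_ratio {t t' p q p' q' : ℝ} (htt' : t ≤ t') (h : q * p' ≤ p * q')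
    (hD : 0 < exp t * p + exp (-t) * q + (exp t * p' + exp (-t) * q'))
    (hD' : 0 < exp t' * p + exp (-t') * q + (exp t' * p' + exp (-t') * q')) :
    (exp t * p + exp (-t) * q) / (exp t * p + exp (-t) * q + (exp t * p' + exp (-t) * q')) ≤
      (exp t' * p + exp (-t') * q) /
        (exp t' * p + exp (-t') * q + (exp t' * p' + exp (-t') * q')) := by
  have hexp : exp t * exp (-t') ≤ exp t' * exp (-t) := by
    rw [← exp_add, ← exp_add, exp_le_exp]
    linarith
  rw [div_le_div_iff₀ hD hD']
  -- the cross terms differ by `(eᵗ' e⁻ᵗ - eᵗ e⁻ᵗ') (p q' - q p')`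
  linear_combination mul_nonneg (sub_nonneg.2 hexp) (sub_nonneg.2 h)

namespace SimpleGraph

variable {V : Type*} {G : SimpleGraph V}

lemma Preconnected.reachable_or_reachable_deleteEdges (hG : G.Preconnected) (i j v : V) :
    (G.deleteEdges {s(i, j)}).Reachable i v ∨ (G.deleteEdges {s(i, j)}).Reachable j v := by
  suffices ∀ {x} (p : G.Walk v x), x = i → _ from this (hG v i).some rfl
  intro x p hx
  induction p with
  | nil => exact Or.inl (hx ▸ Reachable.rfl)
  | @cons v u _ huv _ ih =>
    by_cases he : s(v, u) = s(i, j)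
    · rcases Sym2.eq_iff.1 he with ⟨rfl, -⟩ | ⟨rfl, -⟩
      exacts [Or.inl Reachable.rfl, Or.inr Reachable.rfl]
    · have hadj : (G.deleteEdges {s(i, j)}).Adj u v := by simp [huv.symm, Sym2.eq_swap, he]
      exact (ih hx).imp (·.trans hadj.reachable) (·.trans hadj.reachable)

end SimpleGraph

open SimpleGraph in
theorem condRootProb_le_of_reachable_deleteEdges {V : Type*} [Fintype V] [LinearOrder V]
    {G : SimpleGraph V} [DecidableRel G.Adj] (hT : G.IsTree) {r : V} (L : Finset V)
    {θ θ' : V → V → ℝ} (hθ : ∀ p q, G.Adj p q → 0 < θ p q) {i j : V} (hij : G.Adj i j)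
    (hagree : ∀ p q, ¬(p = i ∧ q = j) → ¬(p = j ∧ q = i) → θ' p q = θ p q)
    (hmono : θ i j ≤ θ' i j) (hmono' : θ j i ≤ θ' j i)
    (hr : (G.deleteEdges {s(i, j)}).Reachable i r) :
    condRootProb G θ r L true (fun _ => true) ≤ condRootProb G θ' r L true (fun _ => true) := by
  have hθe : θ (min i j) (max i j) ≤ θ' (min i j) (max i j) := by
    rcases le_total i j with h | h <;> simpa [h]
  have hW : isingWeight (G.deleteEdges {s(i, j)}) θ' = isingWeight (G.deleteEdges {s(i, j)}) θ :=
    isingWeight_congr _ _ fun p q h => hagree p q (fun ⟨hp, hq⟩ => by simp_all)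
      fun ⟨hp, hq⟩ => by simp_all [Sym2.eq_swap]
  have hcut := sum_ne_mul_sum_eq_le_of_not_reachable _ θ
    (fun p q h => (hθ p q (deleteEdges_le _ h)).le) L hr
    (isBridge_iff.1 (isAcyclic_iff_forall_adj_isBridge.1 hT.isAcyclic hij))
  have hpos := sum_pinned_isingWeight_pos G θ r L
  have hpos' := sum_pinned_isingWeight_pos G θ' r L
  rw [condRootProb_eq_div, condRootProb_eq_div]
  simp only [sum_filter_isingWeight_eq G _ hij, and_assoc, hW] at hpos hpos' ⊢
  exact exp_ratio_le_exp_ratio hθe hcut hpos hpos'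

theorem stmt_7_general {V : Type*} [Fintype V] [LinearOrder V]
    (G : SimpleGraph V) [DecidableRel G.Adj] (hT : G.IsTree)
    (r : V) (L : Finset V)
    (θ θ' : V → V → ℝ)
    (hθ : ∀ p q, G.Adj p q → 0 < θ p q)
    (i j : V) (hij : G.Adj i j)
    (hagree : ∀ p q, ¬(p = i ∧ q = j) → ¬(p = j ∧ q = i) → θ' p q = θ p q)
    (hmono : θ i j ≤ θ' i j) (hmono' : θ j i ≤ θ' j i) :
    condRootProb G θ r L true (fun _ => true) ≤
      condRootProb G θ' r L true (fun _ => true) := by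
  rcases hT.connected.preconnected.reachable_or_reachable_deleteEdges i j r with h | h
  · exact condRootProb_le_of_reachable_deleteEdges hT L hθ hij hagree hmono hmono' h
  · rw [Sym2.eq_swap] at h
    exact condRootProb_le_of_reachable_deleteEdges hT L hθ hij.symm
      (fun p q h₁ h₂ => hagree p q h₂ h₁) hmono' hmono h

/-- In a tree Ising model with all positive edge parameters, the probability
`P(X_r = 1 | X_L = 1)` (all leaves set to `+1`) is monotonically non-decreasing in each
edge parameter `θ_{ij}`: increasing the parameter of one edge `{i,j}`, leaving all other
parameters unchanged, does not decrease it. -/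
theorem stmt_7 {V : Type*} [Fintype V] [LinearOrder V]
    (G : SimpleGraph V) [DecidableRel G.Adj] (hT : G.IsTree)
    (r : V) (L : Finset V) (hL : ∀ v, v ∈ L ↔ v ≠ r ∧ G.degree v = 1)
    (θ θ' : V → V → ℝ)
    (hθ : ∀ p q, G.Adj p q → 0 < θ p q) (hθ' : ∀ p q, G.Adj p q → 0 < θ' p q)
    (i j : V) (hij : G.Adj i j)
    (hagree : ∀ p q, ¬(p = i ∧ q = j) → ¬(p = j ∧ q = i) → θ' p q = θ p q)
    (hmono : θ i j ≤ θ' i j) (hmono' : θ j i ≤ θ' j i) :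
    condRootProb G θ r L true (fun _ => true) ≤
      condRootProb G θ' r L true (fun _ => true) :=
  stmt_7_general G hT r L θ θ' hθ i j hij hagree hmono hmono'
end

section
/- Consider a complete D-ary tree Ising model of depth d with all edge parameters equal to θ = (log 2)/(2D), all leaves fixed to +1, and let a(d) = P(X_r = 1 | X_L = 1). Then the recursion a(d+1) = f(a(d)), where f(a) = (e^θ a + e^{−θ}(1−a))^D / ((e^θ a + e^{−θ}(1−a))^D + (e^{−θ} a + e^θ (1−a))^D), satisfies |a(d+1) − 1/2| < e^{−(log 2)/3} · |a(d) − 1/2|. -/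
/-!
Write `x = e^θ`, `y = e^{-θ}`, `p = x a + y (1 - a)`, `q = y a + x (1 - a)`, so that
`f(a) - 1/2 = (p^D - q^D) / (2 (p^D + q^D))` and `p - q = 2 sinh θ · (2a - 1)`.
Bernoulli's inequality bounds `(p^D - q^D) / (p^D + q^D)` by `D (p - q) / p`, and
`p ≥ cosh θ ≥ 1`, so `|f(a) - 1/2| ≤ 2 D sinh θ · (a - 1/2)`. Superadditivity of `sinh` on
`[0, ∞)` gives `D sinh θ ≤ sinh (D θ) = sinh (log 2 / 2)`, and
`2 sinh (log 2 / 2) = 2^{-1/2} < 2^{-1/3}`.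
-/

open Real

lemma pow_sub_pow_div_pow_add_pow_le {p q : ℝ} (hp : 0 < p) (hq : 0 ≤ q) (hqp : q ≤ p)
    (n : ℕ) :
    (p ^ n - q ^ n) / (p ^ n + q ^ n) ≤ n * (p - q) / p := by
  have hpn : 0 < p ^ n := pow_pos hp n
  have bernoulli := one_add_mul_le_pow (a := q / p - 1) (by linarith [div_nonneg hq hp.le]) n
  calc (p ^ n - q ^ n) / (p ^ n + q ^ n)
      ≤ (p ^ n - q ^ n) / p ^ n :=
        div_le_div_of_nonneg_left (sub_nonneg.2 (pow_le_pow_left₀ hq hqp n)) hpn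
          (le_add_of_nonneg_right (pow_nonneg hq n))
    _ = 1 - (q / p) ^ n := by rw [div_pow]; field_simp
    _ ≤ n * (1 - q / p) := by rw [add_sub_cancel] at bernoulli; linarith
    _ = n * (p - q) / p := by field_simp

lemma Real.sinh_add_sinh_le_sinh_add {x y : ℝ} (hx : 0 ≤ x) (hy : 0 ≤ y) :
    sinh x + sinh y ≤ sinh (x + y) := by
  rw [sinh_add]
  nlinarith [one_le_cosh x, one_le_cosh y, sinh_nonneg_iff.2 hx, sinh_nonneg_iff.2 hy]

lemma Real.natCast_mul_sinh_le {x : ℝ} (hx : 0 ≤ x) (n : ℕ) :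
    n * sinh x ≤ sinh (n * x) := by
  induction n with
  | zero => simp
  | succ n ih =>
    calc ((n + 1 : ℕ) : ℝ) * sinh x = n * sinh x + sinh x := by push_cast; ring
      _ ≤ sinh (n * x) + sinh x := by linarith
      _ ≤ sinh (n * x + x) := sinh_add_sinh_le_sinh_add (by positivity) hx
      _ = sinh ((n + 1 : ℕ) * x) := by push_cast; ring_nf

lemma Real.two_mul_sinh_half_log_two : 2 * sinh (log 2 / 2) = exp (-(log 2 / 2)) := by
  have h : exp (log 2 / 2) = 2 * exp (-(log 2 / 2)) :=
    calc exp (log 2 / 2) = exp (log 2 + -(log 2 / 2)) := by ring_nf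
      _ = 2 * exp (-(log 2 / 2)) := by rw [exp_add, exp_log two_pos]
  rw [sinh_eq, h]
  ring

noncomputable def isingTreeRecursion (D : ℕ) (θ a : ℝ) : ℝ :=
  (exp θ * a + exp (-θ) * (1 - a)) ^ D /
    ((exp θ * a + exp (-θ) * (1 - a)) ^ D + (exp (-θ) * a + exp θ * (1 - a)) ^ D)

lemma abs_isingTreeRecursion_sub_half_le (D : ℕ) {θ a : ℝ} (hθ : 0 ≤ θ) (ha : 1 / 2 ≤ a)
    (ha1 : a ≤ 1) :
    |isingTreeRecursion D θ a - 1 / 2| ≤ 2 * D * sinh θ * (a - 1 / 2) := by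
  set p := exp θ * a + exp (-θ) * (1 - a)
  set q := exp (-θ) * a + exp θ * (1 - a)
  have hsinh : 0 ≤ sinh θ := sinh_nonneg_iff.2 hθ
  have hpq : p - q = 4 * sinh θ * (a - 1 / 2) := by rw [sinh_eq]; ring
  have hp : 1 ≤ p := by
    have : p = cosh θ + 2 * sinh θ * (a - 1 / 2) := by rw [sinh_eq, cosh_eq]; ring
    nlinarith [one_le_cosh θ]
  have hq : 0 ≤ q := by
    have := exp_pos θ; have := exp_pos (-θ)
    positivity
  have hqp : q ≤ p := by nlinarith
  have hsum : 0 < p ^ D + q ^ D := by positivity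
  have hhalf : isingTreeRecursion D θ a - 1 / 2 = (p ^ D - q ^ D) / (p ^ D + q ^ D) / 2 := by
    change p ^ D / (p ^ D + q ^ D) - 1 / 2 = _
    field_simp; ring
  rw [hhalf, abs_of_nonneg (by have := pow_le_pow_left₀ hq hqp D; positivity)]
  calc (p ^ D - q ^ D) / (p ^ D + q ^ D) / 2
      ≤ D * (p - q) / p / 2 := by
        gcongr ?_ / 2; exact pow_sub_pow_div_pow_add_pow_le (by linarith) hq hqp D
    _ ≤ D * (p - q) / 2 := by
        gcongr ?_ / 2; exact div_le_self (mul_nonneg D.cast_nonneg (sub_nonneg.2 hqp)) hp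
    _ = 2 * D * sinh θ * (a - 1 / 2) := by rw [hpq]; ring

/-- Contraction estimate for the recursion `a(d+1) = f(a(d))` in a complete `D`-ary tree Ising
model with all edge parameters `θ = log 2 / (2D)` and all leaves fixed to `+1`:
`|f(a) − 1/2| < e^{−(log 2)/3} · |a − 1/2|` for `a ∈ (1/2, 1]`. -/
theorem stmt_9 (D : ℕ) (hD : 1 ≤ D) (θ : ℝ) (hθ : θ = Real.log 2 / (2 * (D : ℝ)))
    (a : ℝ) (ha : 1 / 2 < a) (ha1 : a ≤ 1) :
    |(Real.exp θ * a + Real.exp (-θ) * (1 - a)) ^ D /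
        ((Real.exp θ * a + Real.exp (-θ) * (1 - a)) ^ D +
          (Real.exp (-θ) * a + Real.exp θ * (1 - a)) ^ D) - 1 / 2| <
      Real.exp (-(Real.log 2) / 3) * |a - 1 / 2| := by
  have hlog : 0 < log 2 := log_pos one_lt_two
  have hθ0 : 0 ≤ θ := by rw [hθ]; positivity
  have hDθ : (D : ℝ) * θ = log 2 / 2 := by
    rw [hθ]; field_simp [Nat.cast_ne_zero.2 (Nat.one_le_iff_ne_zero.1 hD)]
  have hsinh : 2 * D * sinh θ ≤ exp (-(log 2 / 2)) := by
    rw [← two_mul_sinh_half_log_two, ← hDθ, mul_assoc]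
    exact mul_le_mul_of_nonneg_left (natCast_mul_sinh_le hθ0 D) two_pos.le
  have hexp : exp (-(log 2 / 2)) < exp (-log 2 / 3) := exp_lt_exp.2 (by linarith)
  rw [abs_of_pos (sub_pos.2 ha)]
  calc |isingTreeRecursion D θ a - 1 / 2| ≤ 2 * D * sinh θ * (a - 1 / 2) :=
        abs_isingTreeRecursion_sub_half_le D hθ0 ha.le ha1
    _ < exp (-log 2 / 3) * (a - 1 / 2) := by
        gcongr
        exact hsinh.trans_lt hexp
end

section
/- Let P(x_r = 1 | X_L = 1) = a(d−1) in a tree of depth d−1 below a child c of the root, and let b(d) = P(X_c = 1 | X_r = 1, X_L = 1) = e^θ a(d−1)/(e^θ a(d−1) + e^{−θ}(1−a(d−1))) where θ = θ_{rc}. Then |b(d) − e^θ/(e^θ + e^{−θ})| < 2·|a(d−1) − 1/2|. -/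
/-!
Writing `p = e^θ`, `q = e^{-θ}` and `D = p a + q (1 - a)`, the difference equals
`p q (2a - 1) / (D (p + q))`, and the factor in front of `2a - 1` is less than one because
`D (p + q) - p q = p² a + q² (1 - a) > 0`.
-/

namespace TiltedProbability

variable {p q a : ℝ}

lemma mul_add_mul_one_sub_pos (hp : 0 < p) (hq : 0 < q) (ha0 : 0 ≤ a) (ha1 : a ≤ 1) :
    0 < p * a + q * (1 - a) := by
  rcases ha0.eq_or_lt with rfl | ha0
  · simpa using hq
  · nlinarith [mul_nonneg hq.le (sub_nonneg.2 ha1)]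

lemma mul_lt_mul_add_mul_one_sub_mul_add (hp : 0 < p) (hq : 0 < q) (ha0 : 0 ≤ a)
    (ha1 : a ≤ 1) : p * q < (p * a + q * (1 - a)) * (p + q) := by
  have hsq : 0 < p ^ 2 * a + q ^ 2 * (1 - a) :=
    mul_add_mul_one_sub_pos (by positivity) (by positivity) ha0 ha1
  nlinarith

lemma div_sub_div_eq (hD : p * a + q * (1 - a) ≠ 0) (hS : p + q ≠ 0) :
    p * a / (p * a + q * (1 - a)) - p / (p + q)
      = p * q * (2 * a - 1) / ((p * a + q * (1 - a)) * (p + q)) := by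
  field_simp
  ring

theorem abs_div_sub_div_lt (hp : 0 < p) (hq : 0 < q) (ha0 : 0 ≤ a) (ha1 : a ≤ 1)
    (hane : a ≠ 1 / 2) :
    |p * a / (p * a + q * (1 - a)) - p / (p + q)| < |2 * a - 1| := by
  have hD := mul_add_mul_one_sub_pos hp hq ha0 ha1
  have hDS : 0 < (p * a + q * (1 - a)) * (p + q) := by positivity
  have h2a : 0 < |2 * a - 1| := abs_pos.2 fun h ↦ hane (by linarith)
  rw [div_sub_div_eq hD.ne' (by positivity), abs_div, abs_mul, abs_of_pos hDS,
    abs_of_pos (mul_pos hp hq), div_lt_iff₀ hDS,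
    mul_comm |2 * a - 1|]
  exact mul_lt_mul_of_pos_right (mul_lt_mul_add_mul_one_sub_mul_add hp hq ha0 ha1) h2a

end TiltedProbability

/-- Real-analysis inequality behind the neighbor correlation-decay lemma: with
`b = e^θ a / (e^θ a + e^{−θ}(1−a))` and `a ∈ [0,1]`, `a ≠ 1/2`, one has
`|b − e^θ/(e^θ + e^{−θ})| < 2 |a − 1/2|`. -/
theorem stmt_12 (θ a : ℝ) (ha0 : 0 ≤ a) (ha1 : a ≤ 1) (hane : a ≠ 1 / 2) :
    |Real.exp θ * a / (Real.exp θ * a + Real.exp (-θ) * (1 - a)) -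
        Real.exp θ / (Real.exp θ + Real.exp (-θ))| < 2 * |a - 1 / 2| := by
  have h2 : |2 * a - 1| = 2 * |a - 1 / 2| := by
    rw [show 2 * a - 1 = 2 * (a - 1 / 2) by ring, abs_mul, abs_two]
  exact h2 ▸
    TiltedProbability.abs_div_sub_div_lt (Real.exp_pos θ) (Real.exp_pos (-θ)) ha0 ha1 hane
end

section
/- Let P, P̃ be probability mass functions on a finite set related by P(x) = (1/Z) P̆(x) P̃(x) for a normalizer Z, where P̆ is a probability mass function. Suppose |P̆(x_i | x_{A'}) − 1/2| < ε̆ < 1/4 for all x_i ∈ {−1,1} and all x_{A'} (with P̆(x_i) = 1/2). Then for all x_i, x_{A'}: ((1−2ε̆)/(1+2ε̆))·P̃(x_i | x_{A'}) < P(x_i | x_{A'}) < ((1+2ε̆)/(1−2ε̆))·P̃(x_i | x_{A'}), and consequently |P(x_i|x_{A'}) − P̃(x_i|x_{A'})| < 8ε̆. -/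
/-!
Fix `x_{A'}` and write `r = P̆(x_i | x_{A'})`, `s = P̃(x_i | x_{A'})`. Dividing the product formula
by the `x_{A'}`-marginals gives `P(x_i | x_{A'}) = r s / (r s + (1 - r)(1 - s))`. Both `r` and `1 - r`
lie in `(1/2 - ε̆, 1/2 + ε̆)`, hence so does the denominator, a convex combination of them; so
`P(x_i | x_{A'}) / s = r / denominator` lies between `(1/2 - ε̆)/(1/2 + ε̆)` and its inverse.
Since `s ≤ 1` and `1 - 2ε̆ > 1/2`, these multiplicative bounds give the additive one.
-/

lemma Fintype.sum_bool_eq_add_not {M : Type*} [AddCommMonoid M] (f : Bool → M) (x : Bool) :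
    ∑ b, f b = f x + f (!x) := by
  cases x <;> simp [add_comm]

lemma mul_div_mul_add_mul_eq {a b p q : ℝ} (hab : 0 < a + b) (hpq : 0 < p + q) :
    a * p / (a * p + b * q) =
      a / (a + b) * (p / (p + q)) /
        (a / (a + b) * (p / (p + q)) + (1 - a / (a + b)) * (1 - p / (p + q))) := by
  have h₁ : 1 - a / (a + b) = b / (a + b) := by field_simp; ring
  have h₂ : 1 - p / (p + q) = q / (p + q) := by field_simp; ring
  rw [h₁, h₂, div_mul_div_comm, div_mul_div_comm, ← add_div, div_div_div_cancel_right₀]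
  exact (mul_pos hab hpq).ne'

lemma mul_add_mul_one_sub_mem_Ioo {lo hi r t s : ℝ} (hr : r ∈ Set.Ioo lo hi)
    (ht : t ∈ Set.Ioo lo hi) (hs₀ : 0 ≤ s) (hs₁ : s ≤ 1) :
    r * s + t * (1 - s) ∈ Set.Ioo lo hi := by
  simpa only [smul_eq_mul, mul_comm] using
    convex_Ioo lo hi hr ht hs₀ (sub_nonneg.2 hs₁) (add_sub_cancel s 1)

lemma div_mul_lt_mul_div_of_mem_Ioo {lo hi r D s : ℝ} (hlo : 0 < lo) (hr : r ∈ Set.Ioo lo hi)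
    (hD : D ∈ Set.Ioo lo hi) (hs : 0 < s) :
    lo / hi * s < r * s / D ∧ r * s / D < hi / lo * s := by
  obtain ⟨hr₁, hr₂⟩ := hr
  obtain ⟨hD₁, hD₂⟩ := hD
  have hhi : 0 < hi := hlo.trans (hr₁.trans hr₂)
  have hD₀ : 0 < D := hlo.trans hD₁
  constructor
  · rw [div_mul_eq_mul_div, div_lt_div_iff₀ hhi hD₀]
    nlinarith [mul_lt_mul'' hr₁ hD₂ hlo.le hD₀.le]
  · rw [div_mul_eq_mul_div, div_lt_div_iff₀ hD₀ hlo]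
    nlinarith [mul_lt_mul'' hr₂ hD₁ (hlo.trans hr₁).le hlo.le]

lemma mul_div_mul_add_one_sub_mul_one_sub_bounds {ε r s : ℝ} (hε : ε < 1 / 2)
    (hr : |r - 1 / 2| < ε) (hs₀ : 0 < s) (hs₁ : s ≤ 1) :
    (1 - 2 * ε) / (1 + 2 * ε) * s < r * s / (r * s + (1 - r) * (1 - s)) ∧
      r * s / (r * s + (1 - r) * (1 - s)) < (1 + 2 * ε) / (1 - 2 * ε) * s := by
  obtain ⟨hr₁, hr₂⟩ := abs_lt.1 hr
  have hrI : r ∈ Set.Ioo (1 / 2 - ε) (1 / 2 + ε) := ⟨by linarith, by linarith⟩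
  have hrI' : 1 - r ∈ Set.Ioo (1 / 2 - ε) (1 / 2 + ε) := ⟨by linarith, by linarith⟩
  have hlo : (1 / 2 - ε) / (1 / 2 + ε) = (1 - 2 * ε) / (1 + 2 * ε) := by
    rw [← mul_div_mul_left _ _ (two_ne_zero' ℝ)]; ring_nf
  have hhi : (1 / 2 + ε) / (1 / 2 - ε) = (1 + 2 * ε) / (1 - 2 * ε) := by
    rw [← mul_div_mul_left _ _ (two_ne_zero' ℝ)]; ring_nf
  rw [← hlo, ← hhi]
  exact div_mul_lt_mul_div_of_mem_Ioo (by linarith) hrI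
    (mul_add_mul_one_sub_mem_Ioo hrI hrI' hs₀.le hs₁) hs₀

lemma abs_sub_lt_of_ratio_bounds {ε x s : ℝ} (hε₀ : 0 < ε) (hε : ε < 1 / 4) (hs₀ : 0 ≤ s)
    (hs₁ : s ≤ 1) (hlow : (1 - 2 * ε) / (1 + 2 * ε) * s < x)
    (hupp : x < (1 + 2 * ε) / (1 - 2 * ε) * s) : |x - s| < 8 * ε := by
  have hlow' : s - x < 4 * ε / (1 + 2 * ε) * s := by
    have : 1 - (1 - 2 * ε) / (1 + 2 * ε) = 4 * ε / (1 + 2 * ε) := by field_simp; ring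
    nlinarith
  have hupp' : x - s < 4 * ε / (1 - 2 * ε) * s := by
    have : (1 + 2 * ε) / (1 - 2 * ε) - 1 = 4 * ε / (1 - 2 * ε) := by
      field_simp [show 1 - 2 * ε ≠ 0 by linarith]; ring
    nlinarith
  have hc₁ : 4 * ε / (1 + 2 * ε) ≤ 4 * ε := div_le_self (by positivity) (by linarith)
  have hc₂ : 4 * ε / (1 - 2 * ε) < 8 * ε := by
    rw [div_lt_iff₀ (by linarith)]; nlinarith
  rw [abs_sub_lt_iff]
  constructor <;> nlinarith

theorem stmt_16_general {α : Type*} [Fintype α]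
    (P Pb Pt : Bool × α → ℝ) (Z ε : ℝ)
    (hPb0 : ∀ z, 0 < Pb z) (hPt0 : ∀ z, 0 < Pt z)
    (hZ : Z = ∑ z, Pb z * Pt z)
    (hP : ∀ z, P z = Pb z * Pt z / Z)
    (hε : ε < 1 / 4)
    (hcond : ∀ (xi : Bool) (xA : α), |Pb (xi, xA) / (∑ b, Pb (b, xA)) - 1 / 2| < ε) :
    ∀ (xi : Bool) (xA : α),
      ((1 - 2 * ε) / (1 + 2 * ε)) * (Pt (xi, xA) / ∑ b, Pt (b, xA)) <
          P (xi, xA) / ∑ b, P (b, xA) ∧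
        P (xi, xA) / ∑ b, P (b, xA) <
          ((1 + 2 * ε) / (1 - 2 * ε)) * (Pt (xi, xA) / ∑ b, Pt (b, xA)) ∧
        |P (xi, xA) / (∑ b, P (b, xA)) - Pt (xi, xA) / ∑ b, Pt (b, xA)| < 8 * ε := by
  intro xi xA
  have hZ₀ : Z ≠ 0 := by
    have : Nonempty (Bool × α) := ⟨(xi, xA)⟩
    rw [hZ]
    exact (Finset.sum_pos (fun z _ => mul_pos (hPb0 z) (hPt0 z)) Finset.univ_nonempty).ne'
  have hrε := hcond xi xA
  simp only [Fintype.sum_bool_eq_add_not _ xi] at hrε ⊢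
  set r := Pb (xi, xA) / (Pb (xi, xA) + Pb (!xi, xA))
  set s := Pt (xi, xA) / (Pt (xi, xA) + Pt (!xi, xA))
  have hPcond : P (xi, xA) / (P (xi, xA) + P (!xi, xA)) = r * s / (r * s + (1 - r) * (1 - s)) := by
    rw [hP, hP, ← add_div, div_div_div_cancel_right₀ hZ₀]
    exact mul_div_mul_add_mul_eq (add_pos (hPb0 _) (hPb0 _)) (add_pos (hPt0 _) (hPt0 _))
  have hPt₀ : 0 < Pt (xi, xA) + Pt (!xi, xA) := add_pos (hPt0 _) (hPt0 _)
  have hs₀ : 0 < s := div_pos (hPt0 _) hPt₀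
  have hs₁ : s ≤ 1 := div_le_one_of_le₀ (by linarith [hPt0 (!xi, xA)]) hPt₀.le
  obtain ⟨hlow, hupp⟩ :=
    mul_div_mul_add_one_sub_mul_one_sub_bounds (by linarith) hrε hs₀ hs₁
  rw [← hPcond] at hlow hupp
  exact ⟨hlow, hupp,
    abs_sub_lt_of_ratio_bounds ((abs_nonneg _).trans_lt hrε) hε hs₀.le hs₁ hlow hupp⟩

/-- If `P ∝ P̆ · P̃` pointwise, `P̆(x_i) = 1/2`, and `|P̆(x_i | x_{A'}) − 1/2| < ε̆ < 1/4`
for all binary `x_i` (encoded by `Bool`) and all `x_{A'}`, then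
`((1−2ε̆)/(1+2ε̆)) P̃(x_i|x_{A'}) < P(x_i|x_{A'}) < ((1+2ε̆)/(1−2ε̆)) P̃(x_i|x_{A'})`, and
consequently `|P(x_i|x_{A'}) − P̃(x_i|x_{A'})| < 8 ε̆`. -/
theorem stmt_16 {α : Type*} [Fintype α]
    (P Pb Pt : Bool × α → ℝ) (Z ε : ℝ)
    (hPb0 : ∀ z, 0 < Pb z) (hPt0 : ∀ z, 0 < Pt z)
    (hPb1 : ∑ z, Pb z = 1) (hPt1 : ∑ z, Pt z = 1)
    (hZ : Z = ∑ z, Pb z * Pt z)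
    (hP : ∀ z, P z = Pb z * Pt z / Z)
    (hε : ε < 1 / 4)
    (hmarg : ∀ xi : Bool, ∑ xA, Pb (xi, xA) = 1 / 2)
    (hcond : ∀ (xi : Bool) (xA : α), |Pb (xi, xA) / (∑ b, Pb (b, xA)) - 1 / 2| < ε) :
    ∀ (xi : Bool) (xA : α),
      ((1 - 2 * ε) / (1 + 2 * ε)) * (Pt (xi, xA) / ∑ b, Pt (b, xA)) <
          P (xi, xA) / ∑ b, P (b, xA) ∧
        P (xi, xA) / ∑ b, P (b, xA) <
          ((1 + 2 * ε) / (1 - 2 * ε)) * (Pt (xi, xA) / ∑ b, Pt (b, xA)) ∧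
        |P (xi, xA) / (∑ b, P (b, xA)) - Pt (xi, xA) / ∑ b, Pt (b, xA)| < 8 * ε :=
  stmt_16_general P Pb Pt Z ε hPb0 hPt0 hZ hP hε hcond
end
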